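/- arXiv:1506.02803 — 7 statements merged into one kernel-verified Lean document; each statement's English description precedes it below -/
import Mathlib

section
/- Let k ≥ 3 and η ≠ 0 be a real number. Let F be a smooth real-valued function of (z₀,…,z_k) with ∂F/∂z_k nowhere vanishing. Let f₁₁ and f₃₁ be smooth functions of z₀ with (∂f₁₁/∂z₀)² + (∂f₃₁/∂z₀)² nowhere vanishing, let f₂₁ = η, let f₁₂ and f₃₂ be smooth functions of (z₀,…,z_{k−1}), let f₂₂ be a smooth function of (z₀,…,z_{k−2}), and assume Δ₁₂ := f₁₁f₂₂ − ηf₁₂ is nowhere vanishing. Assume the structure equations D_t f₁₁ − D_x f₁₂ = Δ₂₃, D_x f₂₂ = Δ₁₃, and D_t f₃₁ − D_x f₃₂ = −Δ₁₂ hold identically in the jet variables, where Δ₁₃ = f₁₁f₃₂ − f₃₁f₁₂ and Δ₂₃ = ηf₃₂ − f₃₁f₂₂. Suppose l ≥ 0 is finite and a, b, c are smooth real-valued functions of (x, t, z₀,…,z_l) that satisfy identically the Gauss equation ac − b² = −1 and the Codazzi equations f₁₁D_t a + ηD_t b − f₁₂D_x a − f₂₂D_x b − 2bΔ₁₃ +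 (a−c)Δ₂₃ = 0 and f₁₁D_t b + ηD_t c − f₁₂D_x b − f₂₂D_x c + (a−c)Δ₁₃ + 2bΔ₂₃ = 0. Then ∂a/∂z_i = ∂b/∂z_i = ∂c/∂z_i = 0 for all 0 ≤ i ≤ l; that is, a, b and c are universal functions of x and t only. -/
open scoped BigOperators

/-- A jet function: a function of `x`, `t` and the jet variables `z 0, z 1, …`,
where `z i` represents the derivative `∂^i u / ∂x^i`. -/
abbrev JetFun : Type := ℝ → ℝ → (ℕ → ℝ) → ℝ

/-- Partial derivative of a jet function with respect to `x`. -/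
noncomputable def pX (f : JetFun) : JetFun := fun x t z => deriv (fun s => f s t z) x

/-- Partial derivative of a jet function with respect to `t`. -/
noncomputable def pT (f : JetFun) : JetFun := fun x t z => deriv (fun s => f x s z) t

/-- Partial derivative of a jet function with respect to the jet variable `z i`. -/
noncomputable def pZ (i : ℕ) (f : JetFun) : JetFun :=
  fun x t z => deriv (fun s => f x t (Function.update z i s)) (z i)

/-- The total `x`-derivative `D_x = ∂_x + ∑_{i ≥ 0} z_{i+1} ∂_{z_i}`. -/
noncomputable def DX (f : JetFun) : JetFun :=
  fun x t z => pX f x t z + ∑' i : ℕ, z (i + 1) * pZ i f x t z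

/-- The total `t`-derivative `D_t = ∂_t + ∑_{i ≥ 0} (D_x^i F) ∂_{z_i}` associated with the
evolution equation `u_t = F`. -/
noncomputable def DT (F : JetFun) (f : JetFun) : JetFun :=
  fun x t z => pT f x t z + ∑' i : ℕ, (DX^[i] F) x t z * pZ i f x t z

/-- `f` is a smooth function of `(x, t, z 0, …, z m)` only. -/
def SmoothJet (m : ℕ) (f : JetFun) : Prop :=
  ∃ g : ℝ × ℝ × (Fin (m + 1) → ℝ) → ℝ, ContDiff ℝ (⊤ : ℕ∞) g ∧
    ∀ x t z, f x t z = g (x, t, fun i : Fin (m + 1) => z i.1)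

/-- `f` is a smooth function of the jet variables `(z 0, …, z m)` only. -/
def SmoothZ (m : ℕ) (f : JetFun) : Prop :=
  ∃ g : (Fin (m + 1) → ℝ) → ℝ, ContDiff ℝ (⊤ : ℕ∞) g ∧
    ∀ x t z, f x t z = g (fun i : Fin (m + 1) => z i.1)

/-!
Write `Φᵢ = D_xⁱ F`: it has order `k + i` and `∂Φᵢ/∂z_{k+i} = F_{z_k} ≠ 0`. If `a, b, c` have
order `m`, then in the Codazzi equations only `Φ_m` involves `z_{k+m}`, so moving `z_{k+m}` gives
`f₁₁ a_m + η b_m = f₁₁ b_m + η c_m = 0` (a subscript `m` is a `z_m`-derivative). Together with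
the derivative of the Gauss equation this gives `a_m Q = 0`, where `Q = f₁₁² a + 2η f₁₁ b + η² c`.

Where `a_m ≠ 0` we have `Q = 0`, so `S = f₁₁ a + η b` satisfies `S² = η²` and all its partial
derivatives vanish; this removes `D_t` from the Codazzi equations. Differentiating what is left
with respect to `z_{j+1}`, for `j` from the order of `a, b, c` down to `k - 1`, kills the
derivatives of `a, b, c` of order `≥ k - 1` and finally gives `F_{z_k} f₁₁' = 0`. The structure
equations at jets with `z_i = 0` for `i ≥ 1` give `f₃₁' ≠ 0` and `f₁₁ f₁₁' = f₃₁ f₃₁'`, so `f₃₁`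
vanishes on that open set, contradicting `f₃₁' ≠ 0`. Hence `a_m = b_m = c_m = 0`, the order drops,
and induction on `m` concludes.
-/

open Filter Topology Function Finset

/-! ### Jet functions of finite order -/

def OrderLE (m : ℕ) (f : JetFun) : Prop :=
  ∀ x t (z z' : ℕ → ℝ), (∀ i ≤ m, z i = z' i) → f x t z = f x t z'

section OrderLE

variable {k l m n : ℕ} {f F : JetFun}

theorem OrderLE.mono (hf : OrderLE m f) (h : m ≤ n) : OrderLE n f :=
  fun x t z z' hz => hf x t z z' fun i hi => hz i (hi.trans h)

theorem OrderLE.update_eq (hf : OrderLE m f) {i : ℕ} (hi : m < i) (x t : ℝ) (z : ℕ → ℝ)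
    (s : ℝ) : f x t (update z i s) = f x t z :=
  hf x t _ _ fun _ hj => update_of_ne (by omega) _ _

theorem OrderLE.pZ_eq_zero (hf : OrderLE m f) {i : ℕ} (hi : m < i) (x t : ℝ) (z : ℕ → ℝ) :
    pZ i f x t z = 0 := by
  simp only [pZ, hf.update_eq hi, deriv_const]

theorem orderLE_pZ (hf : OrderLE m f) (i : ℕ) : OrderLE m (pZ i f) := by
  intro x t z z' hz
  rcases le_or_gt i m with hi | hi
  · simp only [pZ, hz i hi]
    congr 1
    funext s
    refine hf x t _ _ fun j hj => ?_
    rcases eq_or_ne j i with rfl | hji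
    · simp
    · simp [update_of_ne hji, hz j hj]
  · rw [hf.pZ_eq_zero hi, hf.pZ_eq_zero hi]

theorem orderLE_pX (hf : OrderLE m f) : OrderLE m (pX f) :=
  fun x t z z' hz => congrArg (deriv · x) (funext fun s => hf s t z z' hz)

theorem orderLE_pT (hf : OrderLE m f) : OrderLE m (pT f) :=
  fun x t z z' hz => congrArg (deriv · t) (funext fun s => hf x s z z' hz)

theorem OrderLE.DX_eq (hf : OrderLE m f) (x t : ℝ) (z : ℕ → ℝ) :
    DX f x t z = pX f x t z + ∑ i ∈ range (m + 1), z (i + 1) * pZ i f x t z := by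
  refine congrArg _ (tsum_eq_sum fun i hi => ?_)
  rw [hf.pZ_eq_zero (by simpa using hi), mul_zero]

theorem OrderLE.DT_eq (hf : OrderLE m f) (F : JetFun) (x t : ℝ) (z : ℕ → ℝ) :
    DT F f x t z = pT f x t z + ∑ i ∈ range (m + 1), (DX^[i] F) x t z * pZ i f x t z := by
  refine congrArg _ (tsum_eq_sum fun i hi => ?_)
  rw [hf.pZ_eq_zero (by simpa using hi), mul_zero]

theorem OrderLE.DX_eq_fun (hf : OrderLE m f) :
    DX f = fun x t z => pX f x t z + ∑ i ∈ range (m + 1), z (i + 1) * pZ i f x t z := by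
  funext x t z
  exact hf.DX_eq x t z

theorem orderLE_DX (hf : OrderLE m f) : OrderLE (m + 1) (DX f) := by
  intro x t z z' hz
  rw [hf.DX_eq, hf.DX_eq, orderLE_pX hf x t z z' fun i hi => hz i (by omega)]
  refine congrArg _ (sum_congr rfl fun i hi => ?_)
  rw [hz (i + 1) (by simp at hi; omega), orderLE_pZ hf i x t z z' fun j hj => hz j (by omega)]

theorem orderLE_iterate_DX (hF : OrderLE k F) (i : ℕ) : OrderLE (k + i) (DX^[i] F) := by
  induction i with
  | zero => exact hF
  | succ i ih => rw [iterate_succ_apply', ← add_assoc]; exact orderLE_DX ih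

theorem OrderLE.DT_update_sub {p : JetFun} (hF : OrderLE k F) (hk : 0 < k) (hp : OrderLE m p)
    (x t : ℝ) (z : ℕ → ℝ) (s : ℝ) :
    DT F p x t (update z (k + m) s) - DT F p x t z =
      ((DX^[m] F) x t (update z (k + m) s) - (DX^[m] F) x t z) * pZ m p x t z := by
  have hlow : ∑ i ∈ range m,
      (DX^[i] F) x t (update z (k + m) s) * pZ i p x t (update z (k + m) s) =
        ∑ i ∈ range m, (DX^[i] F) x t z * pZ i p x t z :=
    sum_congr rfl fun i hi => by
      rw [(orderLE_iterate_DX hF i).update_eq (by simp at hi; omega),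
        (orderLE_pZ hp i).update_eq (by omega)]
  rw [hp.DT_eq, hp.DT_eq, sum_range_succ, sum_range_succ, hlow,
    (orderLE_pT hp).update_eq (by omega), (orderLE_pZ hp m).update_eq (by omega)]
  ring

theorem DT_lincomb_eq_zero {p q r : JetFun} (hp : OrderLE l p) (hq : OrderLE l q)
    (hr : OrderLE l r) {x t : ℝ} {z : ℕ → ℝ} {α β γ : ℝ}
    (ht : α * pT p x t z + β * pT q x t z + γ * pT r x t z = 0)
    (hz : ∀ i, α * pZ i p x t z + β * pZ i q x t z + γ * pZ i r x t z = 0) :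
    α * DT F p x t z + β * DT F q x t z + γ * DT F r x t z = 0 := by
  have hsum : ∑ i ∈ range (l + 1), (DX^[i] F) x t z *
      (α * pZ i p x t z + β * pZ i q x t z + γ * pZ i r x t z) = 0 :=
    sum_eq_zero fun i _ => by rw [hz, mul_zero]
  rw [hp.DT_eq, hq.DT_eq, hr.DT_eq]
  simp only [mul_add, sum_add_distrib, Finset.mul_sum, mul_left_comm] at hsum ⊢
  linear_combination ht + hsum

end OrderLE

/-! ### Smooth jet functions -/

theorem hasDerivAt_update_apply (z : ℕ → ℝ) (i j : ℕ) :
    HasDerivAt (fun s => update z i s j) (if j = i then 1 else 0) (z i) := by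
  rcases eq_or_ne j i with rfl | h
  · simpa using hasDerivAt_id' (z j)
  · simpa [update_of_ne h, h] using hasDerivAt_const (z i) (z j)

section Representative

variable {m : ℕ} {f : JetFun} {g : ℝ × ℝ × (Fin (m + 1) → ℝ) → ℝ}

theorem hasDerivAt_x_of_rep (hg : ContDiff ℝ (⊤ : ℕ∞) g)
    (hfg : ∀ x t z, f x t z = g (x, t, fun i : Fin (m + 1) => z i)) (x t : ℝ) (z : ℕ → ℝ) :
    HasDerivAt (fun s => f s t z) (fderiv ℝ g (x, t, fun i => z i) (1, 0, 0)) x := by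
  simp only [hfg]
  exact (hg.differentiable (by simp) _).hasFDerivAt.comp_hasDerivAt x
    ((hasDerivAt_id x).prodMk ((hasDerivAt_const x t).prodMk (hasDerivAt_const x _)))

theorem hasDerivAt_t_of_rep (hg : ContDiff ℝ (⊤ : ℕ∞) g)
    (hfg : ∀ x t z, f x t z = g (x, t, fun i : Fin (m + 1) => z i)) (x t : ℝ) (z : ℕ → ℝ) :
    HasDerivAt (fun s => f x s z) (fderiv ℝ g (x, t, fun i => z i) (0, 1, 0)) t := by
  simp only [hfg]
  exact (hg.differentiable (by simp) _).hasFDerivAt.comp_hasDerivAt t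
    ((hasDerivAt_const t x).prodMk ((hasDerivAt_id t).prodMk (hasDerivAt_const t _)))

theorem hasDerivAt_z_of_rep (hg : ContDiff ℝ (⊤ : ℕ∞) g)
    (hfg : ∀ x t z, f x t z = g (x, t, fun i : Fin (m + 1) => z i)) (i : Fin (m + 1)) (x t : ℝ)
    (z : ℕ → ℝ) :
    HasDerivAt (fun s => f x t (update z i s))
      (fderiv ℝ g (x, t, fun j => z j) (0, 0, Pi.single i 1)) (z i) := by
  have hres : ∀ s, (fun j : Fin (m + 1) => update z i s j) =
      update (fun j : Fin (m + 1) => z j) i s :=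
    fun s => update_comp_eq_of_injective z Fin.val_injective i s
  simp only [hfg, hres]
  refine (hg.differentiable (by simp) _).hasFDerivAt.comp_hasDerivAt_of_eq (z i)
    ((hasDerivAt_const _ x).prodMk ((hasDerivAt_const _ t).prodMk (hasDerivAt_update _ i _))) ?_
  simp

theorem pX_eq_fderiv_of_rep (hg : ContDiff ℝ (⊤ : ℕ∞) g)
    (hfg : ∀ x t z, f x t z = g (x, t, fun i : Fin (m + 1) => z i)) (x t : ℝ) (z : ℕ → ℝ) :
    pX f x t z = fderiv ℝ g (x, t, fun i => z i) (1, 0, 0) :=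
  (hasDerivAt_x_of_rep hg hfg x t z).deriv

theorem pZ_eq_fderiv_of_rep (hg : ContDiff ℝ (⊤ : ℕ∞) g)
    (hfg : ∀ x t z, f x t z = g (x, t, fun i : Fin (m + 1) => z i)) (i : Fin (m + 1)) (x t : ℝ)
    (z : ℕ → ℝ) :
    pZ i f x t z = fderiv ℝ g (x, t, fun j => z j) (0, 0, Pi.single i 1) :=
  (hasDerivAt_z_of_rep hg hfg i x t z).deriv

theorem contDiff_fderiv_apply (hg : ContDiff ℝ (⊤ : ℕ∞) g) (v : ℝ × ℝ × (Fin (m + 1) → ℝ)) :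
    ContDiff ℝ (⊤ : ℕ∞) fun p => fderiv ℝ g p v :=
  (hg.fderiv_right (m := (⊤ : ℕ∞)) (by simp)).clm_apply contDiff_const

theorem fderiv_fderiv_apply (hg : ContDiff ℝ (⊤ : ℕ∞) g) (p v w : ℝ × ℝ × (Fin (m + 1) → ℝ)) :
    fderiv ℝ (fun q => fderiv ℝ g q v) p w = fderiv ℝ (fderiv ℝ g) p w v := by
  rw [fderiv_clm_apply ((hg.fderiv_right (m := (⊤ : ℕ∞)) (by simp)).differentiable (by simp) p)
    (differentiableAt_const v)]
  simp

end Representative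

section Smooth

variable {k m n : ℕ} {f g F : JetFun}

theorem SmoothJet.orderLE (h : SmoothJet m f) : OrderLE m f := by
  obtain ⟨g, -, hfg⟩ := h
  intro x t z z' hz
  rw [hfg, hfg, funext fun i : Fin (m + 1) => hz i (Nat.lt_succ_iff.1 i.2)]

theorem SmoothJet.mono (h : SmoothJet m f) (hmn : m ≤ n) : SmoothJet n f := by
  obtain ⟨g, hg, hfg⟩ := h
  refine ⟨fun p => g (p.1, p.2.1, fun i => p.2.2 (Fin.castLE (by omega) i)), ?_, hfg⟩
  exact hg.comp (contDiff_fst.prodMk ((contDiff_fst.comp contDiff_snd).prodMk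
    (contDiff_pi.2 fun i => (contDiff_apply ℝ ℝ _).comp (contDiff_snd.comp contDiff_snd))))

theorem SmoothJet.map₂ (hf : SmoothJet m f) (hg : SmoothJet m g) {φ : ℝ → ℝ → ℝ}
    (hφ : ContDiff ℝ (⊤ : ℕ∞) fun p : ℝ × ℝ => φ p.1 p.2) :
    SmoothJet m fun x t z => φ (f x t z) (g x t z) := by
  obtain ⟨F, hF, hfF⟩ := hf
  obtain ⟨G, hG, hgG⟩ := hg
  exact ⟨fun p => φ (F p) (G p), hφ.comp (hF.prodMk hG), fun x t z => by simp only [hfF, hgG]⟩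

theorem SmoothJet.add (hf : SmoothJet m f) (hg : SmoothJet m g) :
    SmoothJet m fun x t z => f x t z + g x t z :=
  hf.map₂ hg (contDiff_fst.add contDiff_snd)

theorem SmoothJet.mul (hf : SmoothJet m f) (hg : SmoothJet m g) :
    SmoothJet m fun x t z => f x t z * g x t z :=
  hf.map₂ hg (contDiff_fst.mul contDiff_snd)

theorem SmoothJet.sum {ι : Type*} {s : Finset ι} {G : ι → JetFun}
    (h : ∀ i ∈ s, SmoothJet m (G i)) : SmoothJet m fun x t z => ∑ i ∈ s, G i x t z := by
  classical
  induction s using Finset.induction_on with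
  | empty => exact ⟨fun _ => 0, contDiff_const, fun _ _ _ => by simp⟩
  | insert i s hi ih =>
    simp_rw [Finset.sum_insert hi]
    exact (h i (mem_insert_self i s)).add (ih fun j hj => h j (mem_insert_of_mem hj))

theorem SmoothJet.coord {j : ℕ} (hj : j ≤ m) : SmoothJet m fun _ _ z => z j :=
  ⟨fun p => p.2.2 ⟨j, by omega⟩, (contDiff_apply ℝ ℝ _).comp (contDiff_snd.comp contDiff_snd),
    fun _ _ _ => rfl⟩

theorem SmoothJet.of_smoothZ (h : SmoothZ m f) : SmoothJet m f := by
  obtain ⟨g, hg, hfg⟩ := h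
  exact ⟨fun p => g p.2.2, hg.comp (contDiff_snd.comp contDiff_snd), hfg⟩

theorem SmoothJet.hasDerivAt_x (h : SmoothJet m f) (x t : ℝ) (z : ℕ → ℝ) :
    HasDerivAt (fun s => f s t z) (pX f x t z) x := by
  obtain ⟨g, hg, hfg⟩ := h
  exact (hasDerivAt_x_of_rep hg hfg x t z).differentiableAt.hasDerivAt

theorem SmoothJet.hasDerivAt_t (h : SmoothJet m f) (x t : ℝ) (z : ℕ → ℝ) :
    HasDerivAt (fun s => f x s z) (pT f x t z) t := by
  obtain ⟨g, hg, hfg⟩ := h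
  exact (hasDerivAt_t_of_rep hg hfg x t z).differentiableAt.hasDerivAt

theorem SmoothJet.hasDerivAt_z (h : SmoothJet m f) (i : ℕ) (x t : ℝ) (z : ℕ → ℝ) :
    HasDerivAt (fun s => f x t (update z i s)) (pZ i f x t z) (z i) := by
  refine DifferentiableAt.hasDerivAt ?_
  rcases le_or_gt i m with hi | hi
  · obtain ⟨g, hg, hfg⟩ := h
    exact (hasDerivAt_z_of_rep hg hfg ⟨i, by omega⟩ x t z).differentiableAt
  · simp only [h.orderLE.update_eq hi]
    exact differentiableAt_const _

theorem smoothJet_pX (h : SmoothJet m f) : SmoothJet m (pX f) := by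
  obtain ⟨g, hg, hfg⟩ := h
  exact ⟨_, contDiff_fderiv_apply hg _, pX_eq_fderiv_of_rep hg hfg⟩

theorem smoothJet_pZ (h : SmoothJet m f) (i : ℕ) : SmoothJet m (pZ i f) := by
  rcases le_or_gt i m with hi | hi
  · obtain ⟨g, hg, hfg⟩ := h
    exact ⟨_, contDiff_fderiv_apply hg _, pZ_eq_fderiv_of_rep hg hfg ⟨i, by omega⟩⟩
  · exact ⟨fun _ => 0, contDiff_const, h.orderLE.pZ_eq_zero hi⟩

theorem SmoothJet.pZ_pZ_comm (h : SmoothJet m f) (i j : ℕ) (x t : ℝ) (z : ℕ → ℝ) :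
    pZ i (pZ j f) x t z = pZ j (pZ i f) x t z := by
  obtain ⟨g, hg, hfg⟩ := h.mono (le_max_left m (max i j))
  have hi : i < max m (max i j) + 1 := by omega
  have hj : j < max m (max i j) + 1 := by omega
  rw [pZ_eq_fderiv_of_rep (contDiff_fderiv_apply hg _) (pZ_eq_fderiv_of_rep hg hfg ⟨j, hj⟩) ⟨i, hi⟩,
    pZ_eq_fderiv_of_rep (contDiff_fderiv_apply hg _) (pZ_eq_fderiv_of_rep hg hfg ⟨i, hi⟩) ⟨j, hj⟩,
    fderiv_fderiv_apply hg, fderiv_fderiv_apply hg]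
  exact hg.contDiffAt.isSymmSndFDerivAt (by simp; norm_cast) _ _

theorem SmoothJet.pZ_pX_comm (h : SmoothJet m f) (i : ℕ) (x t : ℝ) (z : ℕ → ℝ) :
    pZ i (pX f) x t z = pX (pZ i f) x t z := by
  obtain ⟨g, hg, hfg⟩ := h.mono (le_max_left m i)
  have hi : i < max m i + 1 := by omega
  rw [pZ_eq_fderiv_of_rep (contDiff_fderiv_apply hg _) (pX_eq_fderiv_of_rep hg hfg) ⟨i, hi⟩,
    pX_eq_fderiv_of_rep (contDiff_fderiv_apply hg _) (pZ_eq_fderiv_of_rep hg hfg ⟨i, hi⟩),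
    fderiv_fderiv_apply hg, fderiv_fderiv_apply hg]
  exact hg.contDiffAt.isSymmSndFDerivAt (by simp; norm_cast) _ _

theorem smoothJet_DX (h : SmoothJet m f) : SmoothJet (m + 1) (DX f) := by
  rw [h.orderLE.DX_eq_fun]
  exact ((smoothJet_pX h).mono (by omega)).add (SmoothJet.sum fun i hi =>
    (SmoothJet.coord (by simp at hi; omega)).mul ((smoothJet_pZ h i).mono (by omega)))

theorem SmoothJet.pZ_succ_DX (h : SmoothJet m f) (j : ℕ) (x t : ℝ) (z : ℕ → ℝ) :
    pZ (j + 1) (DX f) x t z = pZ j f x t z + DX (pZ (j + 1) f) x t z := by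
  have hd := ((smoothJet_pX h).hasDerivAt_z (j + 1) x t z).fun_add
    (HasDerivAt.fun_sum (u := range (m + 1)) fun i _ =>
      (hasDerivAt_update_apply z (j + 1) (i + 1)).fun_mul
        ((smoothJet_pZ h i).hasDerivAt_z (j + 1) x t z))
  rw [h.orderLE.DX_eq_fun, pZ, hd.deriv, (orderLE_pZ h.orderLE (j + 1)).DX_eq]
  simp only [update_eq_self, h.pZ_pX_comm, h.pZ_pZ_comm (j + 1), add_left_inj, ite_mul, one_mul,
    zero_mul, sum_add_distrib, sum_ite_eq', mem_range]
  split_ifs with hj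
  · ring
  · rw [h.orderLE.pZ_eq_zero (by omega)]
    ring

theorem smoothJet_iterate_DX (hF : SmoothJet k F) (i : ℕ) : SmoothJet (k + i) (DX^[i] F) := by
  induction i with
  | zero => exact hF
  | succ i ih => rw [iterate_succ_apply', ← add_assoc]; exact smoothJet_DX ih

theorem SmoothJet.pZ_iterate_DX (hF : SmoothJet k F) (i : ℕ) (x t : ℝ) (z : ℕ → ℝ) :
    pZ (k + i) (DX^[i] F) x t z = pZ k F x t z := by
  induction i generalizing x t z with
  | zero => rfl
  | succ i ih =>
    have h0 : pZ (k + i + 1) (DX^[i] F) = fun _ _ _ => 0 := by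
      funext x t z
      exact (smoothJet_iterate_DX hF i).orderLE.pZ_eq_zero (by omega) x t z
    rw [iterate_succ_apply', ← add_assoc, (smoothJet_iterate_DX hF i).pZ_succ_DX, ih, h0]
    simp [DX, pX, pZ]

theorem injective_of_hasDerivAt_ne_zero {φ φ' : ℝ → ℝ} (hφ : ∀ r, HasDerivAt φ (φ' r) r)
    (hne : ∀ r, φ' r ≠ 0) : Injective φ := by
  have hc : Continuous φ := continuous_iff_continuousAt.2 fun r => (hφ r).continuousAt
  intro a b hab
  by_contra h
  rcases lt_or_gt_of_ne h with h | h
  · obtain ⟨c, -, hc⟩ := exists_hasDerivAt_eq_zero h hc.continuousOn hab fun r _ => hφ r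
    exact hne c hc
  · obtain ⟨c, -, hc⟩ := exists_hasDerivAt_eq_zero h hc.continuousOn hab.symm fun r _ => hφ r
    exact hne c hc

theorem SmoothJet.update_ne (h : SmoothJet m f) {i : ℕ} (hne : ∀ x t z, pZ i f x t z ≠ 0)
    (x t : ℝ) (z : ℕ → ℝ) {s : ℝ} (hs : s ≠ z i) : f x t (update z i s) ≠ f x t z := by
  have hφ : ∀ r, HasDerivAt (fun s => f x t (update z i s)) (pZ i f x t (update z i r)) r :=
    fun r => by simpa using h.hasDerivAt_z i x t (update z i r)
  intro heq
  refine hs (injective_of_hasDerivAt_ne_zero hφ (fun r => hne _ _ _) ?_)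
  simpa using heq

theorem OrderLE.of_pZ_succ_eq_zero (hf : OrderLE (m + 1) f) (hs : SmoothJet n f)
    (h0 : ∀ x t z, pZ (m + 1) f x t z = 0) : OrderLE m f := by
  intro x t z z' hz
  have hd : ∀ r, HasDerivAt (fun s => f x t (update z (m + 1) s)) 0 r := fun r => by
    simpa [h0] using hs.hasDerivAt_z (m + 1) x t (update z (m + 1) r)
  have hconst := is_const_of_deriv_eq_zero (fun r => (hd r).differentiableAt)
    (fun r => (hd r).deriv) (z (m + 1)) (z' (m + 1))
  simp only [update_eq_self] at hconst
  refine hconst.trans (hf x t _ _ fun j hj => ?_)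
  rcases eq_or_ne j (m + 1) with rfl | hj'
  · simp
  · rw [update_of_ne hj']
    exact hz j (by omega)

theorem SmoothZ.pX_eq_zero (h : SmoothZ m f) (x t : ℝ) (z : ℕ → ℝ) : pX f x t z = 0 := by
  obtain ⟨g, -, hfg⟩ := h
  simp [pX, hfg]

theorem SmoothZ.pT_eq_zero (h : SmoothZ m f) (x t : ℝ) (z : ℕ → ℝ) : pT f x t z = 0 := by
  obtain ⟨g, -, hfg⟩ := h
  simp [pT, hfg]

theorem SmoothZ.DT_eq (h : SmoothZ 0 f) (F : JetFun) (x t : ℝ) (z : ℕ → ℝ) :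
    DT F f x t z = F x t z * pZ 0 f x t z := by
  simp [(SmoothJet.of_smoothZ h).orderLE.DT_eq, h.pT_eq_zero]

end Smooth

/-! ### Sets of jets open along coordinate lines -/

theorem HasDerivAt.eq_zero_of_eventually_const {φ : ℝ → ℝ} {v s c : ℝ} (h : HasDerivAt φ v s)
    (hc : ∀ᶠ r in 𝓝 s, φ r = c) : v = 0 :=
  h.unique ((hasDerivAt_const s c).congr_of_eventuallyEq hc)

theorem HasDerivAt.eq_zero_of_sq_eventually_const {φ : ℝ → ℝ} {v s c : ℝ}
    (h : HasDerivAt φ v s) (hc : ∀ᶠ r in 𝓝 s, φ r ^ 2 = c) (hs : φ s ≠ 0) : v = 0 := by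
  simpa [hs] using (h.fun_pow 2).eq_zero_of_eventually_const hc

/-- Openness is only ever used through partial derivatives along coordinate lines, and `ℕ → ℝ`
carries no useful norm. -/
structure IsCoordOpen (U : ℝ → ℝ → (ℕ → ℝ) → Prop) : Prop where
  eventually_x : ∀ {x t z}, U x t z → ∀ᶠ s in 𝓝 x, U s t z
  eventually_t : ∀ {x t z}, U x t z → ∀ᶠ s in 𝓝 t, U x s z
  eventually_z : ∀ {x t z} (i : ℕ), U x t z → ∀ᶠ s in 𝓝 (z i), U x t (update z i s)

namespace IsCoordOpen

variable {U : ℝ → ℝ → (ℕ → ℝ) → Prop} {E : JetFun} {x t : ℝ} {z : ℕ → ℝ}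

theorem of_ne_zero {m : ℕ} (h : SmoothJet m E) : IsCoordOpen fun x t z => E x t z ≠ 0 where
  eventually_x hx := (h.hasDerivAt_x _ _ _).continuousAt.eventually_ne hx
  eventually_t hx := (h.hasDerivAt_t _ _ _).continuousAt.eventually_ne hx
  eventually_z i hx := (h.hasDerivAt_z i _ _ _).continuousAt.eventually_ne (by simpa using hx)

theorem hasDerivAt_z_eq_zero (hU : IsCoordOpen U) {c : ℝ} (hE : ∀ x t z, U x t z → E x t z = c)
    (hx : U x t z) {i : ℕ} {v : ℝ} (hd : HasDerivAt (fun s => E x t (update z i s)) v (z i)) :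
    v = 0 :=
  hd.eq_zero_of_eventually_const ((hU.eventually_z i hx).mono fun _ hs => hE _ _ _ hs)

theorem pZ_eq_zero (hU : IsCoordOpen U) (hE : ∀ x t z, U x t z → E x t z = 0) (hx : U x t z)
    (i : ℕ) : pZ i E x t z = 0 :=
  (Filter.EventuallyEq.deriv_eq (f := fun _ => 0)
    ((hU.eventually_z i hx).mono fun _ hs => hE _ _ _ hs)).trans (deriv_const _ _)

theorem DX_eq_zero (hU : IsCoordOpen U) (hE : ∀ x t z, U x t z → E x t z = 0) (hx : U x t z) :
    DX E x t z = 0 := by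
  have hpX : pX E x t z = 0 := (Filter.EventuallyEq.deriv_eq (f := fun _ => 0)
    ((hU.eventually_x hx).mono fun _ hs => hE _ _ _ hs)).trans (deriv_const _ _)
  simp [DX, hpX, hU.pZ_eq_zero hE hx]

end IsCoordOpen

/-! ### The Gauss–Codazzi system -/

theorem deriv_relations_of_gauss_of_Q_eq_zero {η : ℝ} (hη : η ≠ 0) {A B C L : ℝ → ℝ}
    {A' B' C' L' s : ℝ} (hA : HasDerivAt A A' s) (hB : HasDerivAt B B' s)
    (hC : HasDerivAt C C' s) (hL : HasDerivAt L L' s)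
    (hG : ∀ᶠ r in 𝓝 s, A r * C r - B r ^ 2 = -1)
    (hQ : ∀ᶠ r in 𝓝 s, L r ^ 2 * A r + 2 * η * L r * B r + η ^ 2 * C r = 0) :
    L' * A s + L s * A' + η * B' = 0 ∧
      η * (L s * B' + η * C') = -(L' * (L s * A s + 2 * η * B s)) := by
  -- `(L A + η B)² = A Q - η² (A C - B²)`
  have hS : ∀ᶠ r in 𝓝 s, (L r * A r + η * B r) ^ 2 = η ^ 2 :=
    (hG.and hQ).mono fun r ⟨hg, hq⟩ => by linear_combination A r * hq - η ^ 2 * hg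
  have hS0 : L s * A s + η * B s ≠ 0 := by
    intro h0
    have := hS.self_of_nhds
    rw [h0] at this
    exact hη (by simpa using this.symm)
  have h1 := ((hL.fun_mul hA).fun_add (hB.const_mul η)).eq_zero_of_sq_eventually_const hS hS0
  have h2 := ((((hL.fun_pow 2).fun_mul hA).fun_add ((hL.const_mul (2 * η)).fun_mul hB)).fun_add
    (hC.const_mul (η ^ 2))).eq_zero_of_eventually_const hQ
  refine ⟨h1, ?_⟩
  simp only [Nat.cast_ofNat, Nat.add_one_sub_one, pow_one] at h2
  linear_combination h2 - L s * h1

/-- Moving `z_{k+m}` changes, among the coefficients `D_xⁱ F` of `D_t`, only `D_xᵐ F`, and it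
does change it since `∂(D_xᵐ F)/∂z_{k+m} = F_{z_k} ≠ 0`. -/
theorem lincomb_pZ_eq_zero_of_DT_eq {k m : ℕ} {F p q α E : JetFun} {β : ℝ} (hk : 0 < k)
    (hF : SmoothJet k F) (hFk : ∀ x t z, pZ k F x t z ≠ 0) (hp : OrderLE m p)
    (hq : OrderLE m q) (hα : ∀ x t z s, α x t (update z (k + m) s) = α x t z)
    (hE : ∀ x t z s, E x t (update z (k + m) s) = E x t z)
    (h : ∀ x t z, α x t z * DT F p x t z + β * DT F q x t z = E x t z) (x t : ℝ) (z : ℕ → ℝ) :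
    α x t z * pZ m p x t z + β * pZ m q x t z = 0 := by
  set u := update z (k + m) (z (k + m) + 1)
  have hΦ : (DX^[m] F) x t u - (DX^[m] F) x t z ≠ 0 :=
    sub_ne_zero.2 <| (smoothJet_iterate_DX hF m).update_ne
      (fun x t z => by rw [hF.pZ_iterate_DX]; exact hFk x t z) x t z (by simp)
  refine (mul_eq_zero.1 ?_).resolve_left hΦ
  have hu := h x t u
  rw [hα, hE] at hu
  linear_combination hu - h x t z - α x t z * hF.orderLE.DT_update_sub hk hp x t z _
    - β * hF.orderLE.DT_update_sub hk hq x t z _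

structure DescribesPSS (k : ℕ) (η : ℝ) (F f11 f31 f12 f22 f32 : JetFun) : Prop where
  smoothZ_F : SmoothZ k F
  pZ_F_ne_zero : ∀ x t z, pZ k F x t z ≠ 0
  smoothZ_f11 : SmoothZ 0 f11
  smoothZ_f31 : SmoothZ 0 f31
  smoothZ_f12 : SmoothZ (k - 1) f12
  smoothZ_f32 : SmoothZ (k - 1) f32
  smoothZ_f22 : SmoothZ (k - 2) f22
  Δ12_ne_zero : ∀ x t z, f11 x t z * f22 x t z - η * f12 x t z ≠ 0
  struct1 : ∀ x t z, DT F f11 x t z - DX f12 x t z = η * f32 x t z - f31 x t z * f22 x t z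
  struct2 : ∀ x t z, DX f22 x t z = f11 x t z * f32 x t z - f31 x t z * f12 x t z
  struct3 : ∀ x t z,
    DT F f31 x t z - DX f32 x t z = -(f11 x t z * f22 x t z - η * f12 x t z)

structure GaussCodazzi (η : ℝ) (F f11 f31 f12 f22 f32 : JetFun) (l : ℕ) (a b c : JetFun) :
    Prop where
  smoothJet_a : SmoothJet l a
  smoothJet_b : SmoothJet l b
  smoothJet_c : SmoothJet l c
  gauss : ∀ x t z, a x t z * c x t z - b x t z ^ 2 = -1
  codazzi1 : ∀ x t z,
    f11 x t z * DT F a x t z + η * DT F b x t z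
      - f12 x t z * DX a x t z - f22 x t z * DX b x t z
      - 2 * b x t z * (f11 x t z * f32 x t z - f31 x t z * f12 x t z)
      + (a x t z - c x t z) * (η * f32 x t z - f31 x t z * f22 x t z) = 0
  codazzi2 : ∀ x t z,
    f11 x t z * DT F b x t z + η * DT F c x t z
      - f12 x t z * DX b x t z - f22 x t z * DX c x t z
      + (a x t z - c x t z) * (f11 x t z * f32 x t z - f31 x t z * f12 x t z)
      + 2 * b x t z * (η * f32 x t z - f31 x t z * f22 x t z) = 0

section

variable {k l : ℕ} {η : ℝ} {F f11 f31 f12 f22 f32 a b c : JetFun}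

theorem DescribesPSS.pZ_f31_ne_zero_and_mul_pZ_eq (hE : DescribesPSS k η F f11 f31 f12 f22 f32)
    (x t : ℝ) (z : ℕ → ℝ) :
    pZ 0 f31 x t z ≠ 0 ∧ f11 x t z * pZ 0 f11 x t z = f31 x t z * pZ 0 f31 x t z := by
  set w : ℕ → ℝ := update 0 0 (z 0)
  have hwz : ∀ i ≤ 0, w i = z i := fun i hi => by obtain rfl : i = 0 := (by omega); simp [w]
  have hDX : ∀ {n g}, SmoothZ n g → DX g x t w = 0 := fun hg => by
    simp [DX, w, hg.pX_eq_zero]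
  have h11 := (SmoothJet.of_smoothZ hE.smoothZ_f11).orderLE
  have h31 := (SmoothJet.of_smoothZ hE.smoothZ_f31).orderLE
  rw [← h11 x t w z hwz, ← h31 x t w z hwz, ← orderLE_pZ h11 0 x t w z hwz,
    ← orderLE_pZ h31 0 x t w z hwz]
  have e1 := hE.struct1 x t w
  have e2 := hE.struct2 x t w
  have e3 := hE.struct3 x t w
  rw [hE.smoothZ_f11.DT_eq, hDX hE.smoothZ_f12] at e1
  rw [hDX hE.smoothZ_f22] at e2
  rw [hE.smoothZ_f31.DT_eq, hDX hE.smoothZ_f32] at e3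
  have hΔ := hE.Δ12_ne_zero x t w
  have hF : F x t w ≠ 0 := fun h0 => hΔ (by linear_combination e3 - pZ 0 f31 x t w * h0)
  refine ⟨fun h0 => hΔ (by linear_combination e3 - F x t w * h0), mul_left_cancel₀ hF ?_⟩
  linear_combination f11 x t w * e1 - f31 x t w * e3 - η * e2

namespace GaussCodazzi

theorem lincomb_pZ_top_eq_zero (hk : 2 ≤ k) (hE : DescribesPSS k η F f11 f31 f12 f22 f32)
    (hS : GaussCodazzi η F f11 f31 f12 f22 f32 l a b c) {m : ℕ} (ha : OrderLE m a)
    (hb : OrderLE m b) (hc : OrderLE m c) (x t : ℝ) (z : ℕ → ℝ) :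
    f11 x t z * pZ m a x t z + η * pZ m b x t z = 0 ∧
      f11 x t z * pZ m b x t z + η * pZ m c x t z = 0 := by
  have hu : ∀ {n g}, OrderLE n g → n < k + m →
      ∀ x t z s, g x t (update z (k + m) s) = g x t z :=
    fun hg hn => hg.update_eq hn
  have o11 := (SmoothJet.of_smoothZ hE.smoothZ_f11).orderLE
  have o31 := (SmoothJet.of_smoothZ hE.smoothZ_f31).orderLE
  have o12 := (SmoothJet.of_smoothZ hE.smoothZ_f12).orderLE
  have o32 := (SmoothJet.of_smoothZ hE.smoothZ_f32).orderLE
  have o22 := (SmoothJet.of_smoothZ hE.smoothZ_f22).orderLE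
  have hF := SmoothJet.of_smoothZ hE.smoothZ_F
  constructor
  · refine lincomb_pZ_eq_zero_of_DT_eq (by omega) hF hE.pZ_F_ne_zero ha hb (hu o11 (by omega))
      (E := fun x t z => f12 x t z * DX a x t z + f22 x t z * DX b x t z
        + 2 * b x t z * (f11 x t z * f32 x t z - f31 x t z * f12 x t z)
        - (a x t z - c x t z) * (η * f32 x t z - f31 x t z * f22 x t z)) (fun x t z s => ?_)
      (fun x t z => by linear_combination hS.codazzi1 x t z) x t z
    simp only [hu o11 (by omega), hu o31 (by omega), hu o12 (by omega), hu o32 (by omega),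
      hu o22 (by omega), hu ha (by omega), hu hb (by omega), hu hc (by omega),
      hu (orderLE_DX ha) (by omega), hu (orderLE_DX hb) (by omega)]
  · refine lincomb_pZ_eq_zero_of_DT_eq (by omega) hF hE.pZ_F_ne_zero hb hc (hu o11 (by omega))
      (E := fun x t z => f12 x t z * DX b x t z + f22 x t z * DX c x t z
        - (a x t z - c x t z) * (f11 x t z * f32 x t z - f31 x t z * f12 x t z)
        - 2 * b x t z * (η * f32 x t z - f31 x t z * f22 x t z)) (fun x t z s => ?_)
      (fun x t z => by linear_combination hS.codazzi2 x t z) x t z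
    simp only [hu o11 (by omega), hu o31 (by omega), hu o12 (by omega), hu o32 (by omega),
      hu o22 (by omega), hu ha (by omega), hu hb (by omega), hu hc (by omega),
      hu (orderLE_DX hb) (by omega), hu (orderLE_DX hc) (by omega)]

section OnQZero

variable {U : ℝ → ℝ → (ℕ → ℝ) → Prop} {x t : ℝ} {z : ℕ → ℝ}

theorem pZ_relations_of_Q_eq_zero (hη : η ≠ 0) (hE : DescribesPSS k η F f11 f31 f12 f22 f32)
    (hS : GaussCodazzi η F f11 f31 f12 f22 f32 l a b c) (hU : IsCoordOpen U)
    (hQ : ∀ x t z, U x t z →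
      f11 x t z ^ 2 * a x t z + 2 * η * f11 x t z * b x t z + η ^ 2 * c x t z = 0)
    (hx : U x t z) (i : ℕ) :
    pZ i f11 x t z * a x t z + f11 x t z * pZ i a x t z + η * pZ i b x t z = 0 ∧
      η * (f11 x t z * pZ i b x t z + η * pZ i c x t z) =
        -(pZ i f11 x t z * (f11 x t z * a x t z + 2 * η * b x t z)) := by
  simpa using deriv_relations_of_gauss_of_Q_eq_zero hη (hS.smoothJet_a.hasDerivAt_z i x t z)
    (hS.smoothJet_b.hasDerivAt_z i x t z) (hS.smoothJet_c.hasDerivAt_z i x t z)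
    ((SmoothJet.of_smoothZ hE.smoothZ_f11).hasDerivAt_z i x t z)
    (Eventually.of_forall fun _ => hS.gauss _ _ _) ((hU.eventually_z i hx).mono fun _ => hQ _ _ _)

theorem pT_relations_of_Q_eq_zero (hη : η ≠ 0) (hE : DescribesPSS k η F f11 f31 f12 f22 f32)
    (hS : GaussCodazzi η F f11 f31 f12 f22 f32 l a b c) (hU : IsCoordOpen U)
    (hQ : ∀ x t z, U x t z →
      f11 x t z ^ 2 * a x t z + 2 * η * f11 x t z * b x t z + η ^ 2 * c x t z = 0)
    (hx : U x t z) :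
    f11 x t z * pT a x t z + η * pT b x t z = 0 ∧
      η * (f11 x t z * pT b x t z + η * pT c x t z) = 0 := by
  have h11 := (SmoothJet.of_smoothZ hE.smoothZ_f11).hasDerivAt_t x t z
  rw [hE.smoothZ_f11.pT_eq_zero] at h11
  simpa using deriv_relations_of_gauss_of_Q_eq_zero hη (hS.smoothJet_a.hasDerivAt_t x t z)
    (hS.smoothJet_b.hasDerivAt_t x t z) (hS.smoothJet_c.hasDerivAt_t x t z) h11
    (Eventually.of_forall fun _ => hS.gauss _ _ _) ((hU.eventually_t hx).mono fun _ => hQ _ _ _)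

theorem codazzi_of_Q_eq_zero (hη : η ≠ 0) (hE : DescribesPSS k η F f11 f31 f12 f22 f32)
    (hS : GaussCodazzi η F f11 f31 f12 f22 f32 l a b c) (hU : IsCoordOpen U)
    (hQ : ∀ x t z, U x t z →
      f11 x t z ^ 2 * a x t z + 2 * η * f11 x t z * b x t z + η ^ 2 * c x t z = 0)
    (hx : U x t z) :
    F x t z * pZ 0 f11 x t z * a x t z + f12 x t z * DX a x t z + f22 x t z * DX b x t z
        + 2 * b x t z * (f11 x t z * f32 x t z - f31 x t z * f12 x t z)
        - (a x t z - c x t z) * (η * f32 x t z - f31 x t z * f22 x t z) = 0 ∧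
      F x t z * pZ 0 f11 x t z * (f11 x t z * a x t z + 2 * η * b x t z)
        + η * (f12 x t z * DX b x t z + f22 x t z * DX c x t z
          - (a x t z - c x t z) * (f11 x t z * f32 x t z - f31 x t z * f12 x t z)
          - 2 * b x t z * (η * f32 x t z - f31 x t z * f22 x t z)) = 0 := by
  have o11 := ((SmoothJet.of_smoothZ hE.smoothZ_f11).orderLE).mono (Nat.zero_le l)
  have hpT := hE.smoothZ_f11.pT_eq_zero x t z
  obtain ⟨hSt, hTt⟩ := hS.pT_relations_of_Q_eq_zero hη hE hU hQ hx
  have hz := hS.pZ_relations_of_Q_eq_zero hη hE hU hQ hx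
  have h1 := DT_lincomb_eq_zero (F := F) hS.smoothJet_a.orderLE hS.smoothJet_b.orderLE o11
    (α := f11 x t z) (β := η) (γ := a x t z) (by rw [hpT]; linear_combination hSt)
    fun i => by linear_combination (hz i).1
  have h2 := DT_lincomb_eq_zero (F := F) hS.smoothJet_b.orderLE hS.smoothJet_c.orderLE o11
    (α := η * f11 x t z) (β := η ^ 2) (γ := f11 x t z * a x t z + 2 * η * b x t z)
    (by rw [hpT]; linear_combination hTt) fun i => by linear_combination (hz i).2
  rw [hE.smoothZ_f11.DT_eq] at h1 h2
  exact ⟨by linear_combination h1 - hS.codazzi1 x t z,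
    by linear_combination h2 - η * hS.codazzi2 x t z⟩

theorem pZ_succ_codazzi_of_Q_eq_zero (hη : η ≠ 0) (hE : DescribesPSS k η F f11 f31 f12 f22 f32)
    (hS : GaussCodazzi η F f11 f31 f12 f22 f32 l a b c) (hU : IsCoordOpen U)
    (hQ : ∀ x t z, U x t z →
      f11 x t z ^ 2 * a x t z + 2 * η * f11 x t z * b x t z + η ^ 2 * c x t z = 0)
    {j : ℕ} (hj : k ≤ j + 1) (hvan : ∀ x t z, U x t z →
      pZ (j + 1) a x t z = 0 ∧ pZ (j + 1) b x t z = 0 ∧ pZ (j + 1) c x t z = 0)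
    (hx : U x t z) :
    pZ (j + 1) F x t z * pZ 0 f11 x t z * a x t z + f12 x t z * pZ j a x t z
        + f22 x t z * pZ j b x t z = 0 ∧
      pZ (j + 1) F x t z * pZ 0 f11 x t z * (f11 x t z * a x t z + 2 * η * b x t z)
        + η * (f12 x t z * pZ j b x t z + f22 x t z * pZ j c x t z) = 0 := by
  have o11 := (SmoothJet.of_smoothZ hE.smoothZ_f11).orderLE
  have hconst : ∀ {n g}, OrderLE n g → n < j + 1 →
      HasDerivAt (fun s => g x t (update z (j + 1) s)) 0 (z (j + 1)) := fun hg hn => by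
    simp only [hg.update_eq hn]
    exact hasDerivAt_const _ _
  have hDX : ∀ {p}, SmoothJet l p → (∀ x t z, U x t z → pZ (j + 1) p x t z = 0) →
      HasDerivAt (fun s => DX p x t (update z (j + 1) s)) (pZ j p x t z) (z (j + 1)) :=
    fun hp hp0 => by simpa [hp.pZ_succ_DX, hU.DX_eq_zero hp0 hx] using
      (smoothJet_DX hp).hasDerivAt_z (j + 1) x t z
  have dF := (SmoothJet.of_smoothZ hE.smoothZ_F).hasDerivAt_z (j + 1) x t z
  have da := hS.smoothJet_a.hasDerivAt_z (j + 1) x t z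
  have db := hS.smoothJet_b.hasDerivAt_z (j + 1) x t z
  have dc := hS.smoothJet_c.hasDerivAt_z (j + 1) x t z
  have dL := hconst (orderLE_pZ o11 0) (by omega)
  have d11 := hconst o11 (by omega)
  have d31 := hconst (SmoothJet.of_smoothZ hE.smoothZ_f31).orderLE (by omega)
  have d12 := hconst (SmoothJet.of_smoothZ hE.smoothZ_f12).orderLE (by omega)
  have d32 := hconst (SmoothJet.of_smoothZ hE.smoothZ_f32).orderLE (by omega)
  have d22 := hconst (SmoothJet.of_smoothZ hE.smoothZ_f22).orderLE (by omega)
  have dDa := hDX hS.smoothJet_a fun x t z hx => (hvan x t z hx).1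
  have dDb := hDX hS.smoothJet_b fun x t z hx => (hvan x t z hx).2.1
  have dDc := hDX hS.smoothJet_c fun x t z hx => (hvan x t z hx).2.2
  have e1 := hU.hasDerivAt_z_eq_zero
    (fun x t z hx => (hS.codazzi_of_Q_eq_zero hη hE hU hQ hx).1) hx
    ((((((dF.fun_mul dL).fun_mul da).fun_add (d12.fun_mul dDa)).fun_add (d22.fun_mul dDb)).fun_add
      ((db.const_mul 2).fun_mul ((d11.fun_mul d32).fun_sub (d31.fun_mul d12)))).fun_sub
      ((da.fun_sub dc).fun_mul ((d32.const_mul η).fun_sub (d31.fun_mul d22))))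
  have e2 := hU.hasDerivAt_z_eq_zero
    (fun x t z hx => (hS.codazzi_of_Q_eq_zero hη hE hU hQ hx).2) hx
    (((dF.fun_mul dL).fun_mul ((d11.fun_mul da).fun_add (db.const_mul (2 * η)))).fun_add
      (((((d12.fun_mul dDb).fun_add (d22.fun_mul dDc)).fun_sub
        ((da.fun_sub dc).fun_mul ((d11.fun_mul d32).fun_sub (d31.fun_mul d12)))).fun_sub
        ((db.const_mul 2).fun_mul ((d32.const_mul η).fun_sub (d31.fun_mul d22)))).const_mul η))
  obtain ⟨hva, hvb, hvc⟩ := hvan x t z hx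
  simp only [update_eq_self, hva, hvb, hvc] at e1 e2
  exact ⟨by linear_combination e1, by linear_combination e2⟩

theorem pZ_eq_zero_of_pZ_succ_of_Q_eq_zero (hk : 2 ≤ k) (hη : η ≠ 0)
    (hE : DescribesPSS k η F f11 f31 f12 f22 f32)
    (hS : GaussCodazzi η F f11 f31 f12 f22 f32 l a b c) (hU : IsCoordOpen U)
    (hQ : ∀ x t z, U x t z →
      f11 x t z ^ 2 * a x t z + 2 * η * f11 x t z * b x t z + η ^ 2 * c x t z = 0)
    {j : ℕ} (hj : k ≤ j + 1) (hvan : ∀ x t z, U x t z →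
      pZ (j + 1) a x t z = 0 ∧ pZ (j + 1) b x t z = 0 ∧ pZ (j + 1) c x t z = 0)
    (hx : U x t z) :
    pZ (j + 1) F x t z * pZ 0 f11 x t z = 0 ∧
      pZ j a x t z = 0 ∧ pZ j b x t z = 0 ∧ pZ j c x t z = 0 := by
  obtain ⟨e1, e2⟩ := hS.pZ_succ_codazzi_of_Q_eq_zero hη hE hU hQ hj hvan hx
  obtain ⟨hP, hR⟩ := hS.pZ_relations_of_Q_eq_zero hη hE hU hQ hx j
  rw [(SmoothJet.of_smoothZ hE.smoothZ_f11).orderLE.pZ_eq_zero (by omega)] at hP hR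
  have hS0 : f11 x t z * a x t z + η * b x t z ≠ 0 := fun h0 =>
    hη <| pow_eq_zero_iff two_ne_zero |>.1 <| by
      linear_combination (f11 x t z * a x t z + η * b x t z) * h0 - a x t z * hQ x t z hx
        + η ^ 2 * hS.gauss x t z
  have hX : pZ (j + 1) F x t z * pZ 0 f11 x t z = 0 := by
    have h2 : 2 * η * (f11 x t z * a x t z + η * b x t z) *
        (pZ (j + 1) F x t z * pZ 0 f11 x t z) = 0 := by
      linear_combination η * f11 x t z * e1 + η * e2 - η * f12 x t z * hP - f22 x t z * hR
    simpa [hη, hS0] using h2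
  have ha : pZ j a x t z = 0 := by
    have h2 : pZ j a x t z * (f11 x t z * f22 x t z - η * f12 x t z) = 0 := by
      linear_combination η * a x t z * hX - η * e1 + f22 x t z * hP
    exact (mul_eq_zero.1 h2).resolve_right (hE.Δ12_ne_zero x t z)
  have hb : pZ j b x t z = 0 := by simpa [ha, hη] using hP
  exact ⟨hX, ha, hb, by simpa [hb, hη] using hR⟩

theorem not_of_Q_eq_zero (hk : 2 ≤ k) (hη : η ≠ 0) (hE : DescribesPSS k η F f11 f31 f12 f22 f32)
    (hS : GaussCodazzi η F f11 f31 f12 f22 f32 l a b c) (hU : IsCoordOpen U)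
    (hQ : ∀ x t z, U x t z →
      f11 x t z ^ 2 * a x t z + 2 * η * f11 x t z * b x t z + η ^ 2 * c x t z = 0)
    (x t : ℝ) (z : ℕ → ℝ) : ¬ U x t z := by
  intro hx
  have hvan : ∀ d j, l < j + d → k ≤ j → ∀ x t z, U x t z →
      pZ j a x t z = 0 ∧ pZ j b x t z = 0 ∧ pZ j c x t z = 0 := by
    intro d
    induction d with
    | zero =>
      intro j hj _ x t z _
      exact ⟨hS.smoothJet_a.orderLE.pZ_eq_zero hj x t z,
        hS.smoothJet_b.orderLE.pZ_eq_zero hj x t z, hS.smoothJet_c.orderLE.pZ_eq_zero hj x t z⟩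
    | succ d ih =>
      intro j hj hkj x t z hx
      exact (hS.pZ_eq_zero_of_pZ_succ_of_Q_eq_zero hk hη hE hU hQ (by omega)
        (ih (j + 1) (by omega) (by omega)) hx).2
  obtain ⟨j, rfl⟩ : ∃ j, k = j + 1 := ⟨k - 1, by omega⟩
  have hL : ∀ x t z, U x t z → pZ 0 f11 x t z = 0 := fun x t z hx =>
    (mul_eq_zero.1 (hS.pZ_eq_zero_of_pZ_succ_of_Q_eq_zero hk hη hE hU hQ le_rfl
      (hvan (l + 1) (j + 1) (by omega) le_rfl) hx).1).resolve_left (hE.pZ_F_ne_zero x t z)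
  have h31 : ∀ x t z, U x t z → f31 x t z = 0 := fun x t z hx => by
    obtain ⟨hne, heq⟩ := hE.pZ_f31_ne_zero_and_mul_pZ_eq x t z
    rw [hL x t z hx, mul_zero, eq_comm, mul_eq_zero] at heq
    exact heq.resolve_right hne
  exact (hE.pZ_f31_ne_zero_and_mul_pZ_eq x t z).1 (hU.pZ_eq_zero h31 hx 0)

end OnQZero

theorem pZ_top_eq_zero (hk : 2 ≤ k) (hη : η ≠ 0) (hE : DescribesPSS k η F f11 f31 f12 f22 f32)
    (hS : GaussCodazzi η F f11 f31 f12 f22 f32 l a b c) {m : ℕ} (ha : OrderLE m a)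
    (hb : OrderLE m b) (hc : OrderLE m c) (x t : ℝ) (z : ℕ → ℝ) :
    pZ m a x t z = 0 ∧ pZ m b x t z = 0 ∧ pZ m c x t z = 0 := by
  have hPR := hS.lincomb_pZ_top_eq_zero hk hE ha hb hc
  have ha0 : pZ m a x t z = 0 := by
    refine not_not.1 (hS.not_of_Q_eq_zero hk hη hE
      (IsCoordOpen.of_ne_zero (smoothJet_pZ hS.smoothJet_a m)) (fun x t z hx => ?_) x t z)
    have hG := (((hS.smoothJet_a.hasDerivAt_z m x t z).fun_mul
      (hS.smoothJet_c.hasDerivAt_z m x t z)).fun_sub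
      ((hS.smoothJet_b.hasDerivAt_z m x t z).fun_pow 2)).eq_zero_of_eventually_const
      (Eventually.of_forall fun _ => hS.gauss _ _ _)
    simp only [update_eq_self, Nat.cast_ofNat, Nat.add_one_sub_one, pow_one] at hG
    refine (mul_eq_zero.1 ?_).resolve_left hx
    linear_combination η ^ 2 * hG + (a x t z * f11 x t z + 2 * η * b x t z) * (hPR x t z).1
      - η * a x t z * (hPR x t z).2
  have hb0 : pZ m b x t z = 0 := by simpa [ha0, hη] using (hPR x t z).1
  exact ⟨ha0, hb0, by simpa [hb0, hη] using (hPR x t z).2⟩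

theorem pZ_eq_zero_of_orderLE (hk : 2 ≤ k) (hη : η ≠ 0)
    (hE : DescribesPSS k η F f11 f31 f12 f22 f32)
    (hS : GaussCodazzi η F f11 f31 f12 f22 f32 l a b c) {m : ℕ} (ha : OrderLE m a)
    (hb : OrderLE m b) (hc : OrderLE m c) (i : ℕ) (x t : ℝ) (z : ℕ → ℝ) :
    pZ i a x t z = 0 ∧ pZ i b x t z = 0 ∧ pZ i c x t z = 0 := by
  induction m with
  | zero =>
    rcases Nat.eq_zero_or_pos i with rfl | hi
    · exact hS.pZ_top_eq_zero hk hη hE ha hb hc x t z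
    · exact ⟨ha.pZ_eq_zero hi x t z, hb.pZ_eq_zero hi x t z, hc.pZ_eq_zero hi x t z⟩
  | succ m ih =>
    have h0 := hS.pZ_top_eq_zero hk hη hE ha hb hc
    exact ih (ha.of_pZ_succ_eq_zero hS.smoothJet_a fun x t z => (h0 x t z).1)
      (hb.of_pZ_succ_eq_zero hS.smoothJet_b fun x t z => (h0 x t z).2.1)
      (hc.of_pZ_succ_eq_zero hS.smoothJet_c fun x t z => (h0 x t z).2.2)

end GaussCodazzi

end

theorem universal_second_fundamental_form_general
    (k l : ℕ) (hk : 3 ≤ k) (η : ℝ) (hη : η ≠ 0)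
    (F f11 f31 f12 f22 f32 a b c : JetFun)
    (hF : SmoothZ k F)
    (hFzk : ∀ x t z, pZ k F x t z ≠ 0)
    (hf11 : SmoothZ 0 f11) (hf31 : SmoothZ 0 f31)
    (hf12 : SmoothZ (k - 1) f12) (hf32 : SmoothZ (k - 1) f32)
    (hf22 : SmoothZ (k - 2) f22)
    (hΔ12 : ∀ x t z, f11 x t z * f22 x t z - η * f12 x t z ≠ 0)
    (hstruct1 : ∀ x t z, DT F f11 x t z - DX f12 x t z
      = η * f32 x t z - f31 x t z * f22 x t z)
    (hstruct2 : ∀ x t z, DX f22 x t z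
      = f11 x t z * f32 x t z - f31 x t z * f12 x t z)
    (hstruct3 : ∀ x t z, DT F f31 x t z - DX f32 x t z
      = -(f11 x t z * f22 x t z - η * f12 x t z))
    (ha : SmoothJet l a) (hb : SmoothJet l b) (hc : SmoothJet l c)
    (hGauss : ∀ x t z, a x t z * c x t z - (b x t z) ^ 2 = -1)
    (hCod1 : ∀ x t z,
      f11 x t z * DT F a x t z + η * DT F b x t z
        - f12 x t z * DX a x t z - f22 x t z * DX b x t z
        - 2 * b x t z * (f11 x t z * f32 x t z - f31 x t z * f12 x t z)
        + (a x t z - c x t z) * (η * f32 x t z - f31 x t z * f22 x t z) = 0)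
    (hCod2 : ∀ x t z,
      f11 x t z * DT F b x t z + η * DT F c x t z
        - f12 x t z * DX b x t z - f22 x t z * DX c x t z
        + (a x t z - c x t z) * (f11 x t z * f32 x t z - f31 x t z * f12 x t z)
        + 2 * b x t z * (η * f32 x t z - f31 x t z * f22 x t z) = 0) :
    ∀ i ≤ l, ∀ x t z,
      pZ i a x t z = 0 ∧ pZ i b x t z = 0 ∧ pZ i c x t z = 0 := by
  have hE : DescribesPSS k η F f11 f31 f12 f22 f32 :=
    ⟨hF, hFzk, hf11, hf31, hf12, hf32, hf22, hΔ12, hstruct1, hstruct2, hstruct3⟩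
  have hS : GaussCodazzi η F f11 f31 f12 f22 f32 l a b c := ⟨ha, hb, hc, hGauss, hCod1, hCod2⟩
  intro i _ x t z
  exact hS.pZ_eq_zero_of_orderLE (by omega) hη hE ha.orderLE hb.orderLE hc.orderLE i x t z

/-- main theorem: for a `k`-th order (`k ≥ 3`) evolution equation
`u_t = F(z₀,…,z_k)` describing `η`-pseudo-spherical surfaces, any coefficients `a`, `b`, `c`
of a second fundamental form depending on a jet of finite order are universal: they depend
only on `x` and `t`. -/
theorem universal_second_fundamental_form
    (k l : ℕ) (hk : 3 ≤ k) (η : ℝ) (hη : η ≠ 0)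
    (F f11 f31 f12 f22 f32 a b c : JetFun)
    (hF : SmoothZ k F)
    (hFzk : ∀ x t z, pZ k F x t z ≠ 0)
    (hf11 : SmoothZ 0 f11) (hf31 : SmoothZ 0 f31)
    (hreg : ∀ x t z, (pZ 0 f11 x t z) ^ 2 + (pZ 0 f31 x t z) ^ 2 ≠ 0)
    (hf12 : SmoothZ (k - 1) f12) (hf32 : SmoothZ (k - 1) f32)
    (hf22 : SmoothZ (k - 2) f22)
    (hΔ12 : ∀ x t z, f11 x t z * f22 x t z - η * f12 x t z ≠ 0)
    (hstruct1 : ∀ x t z, DT F f11 x t z - DX f12 x t z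
      = η * f32 x t z - f31 x t z * f22 x t z)
    (hstruct2 : ∀ x t z, DX f22 x t z
      = f11 x t z * f32 x t z - f31 x t z * f12 x t z)
    (hstruct3 : ∀ x t z, DT F f31 x t z - DX f32 x t z
      = -(f11 x t z * f22 x t z - η * f12 x t z))
    (ha : SmoothJet l a) (hb : SmoothJet l b) (hc : SmoothJet l c)
    (hGauss : ∀ x t z, a x t z * c x t z - (b x t z) ^ 2 = -1)
    (hCod1 : ∀ x t z,
      f11 x t z * DT F a x t z + η * DT F b x t z
        - f12 x t z * DX a x t z - f22 x t z * DX b x t z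
        - 2 * b x t z * (f11 x t z * f32 x t z - f31 x t z * f12 x t z)
        + (a x t z - c x t z) * (η * f32 x t z - f31 x t z * f22 x t z) = 0)
    (hCod2 : ∀ x t z,
      f11 x t z * DT F b x t z + η * DT F c x t z
        - f12 x t z * DX b x t z - f22 x t z * DX c x t z
        + (a x t z - c x t z) * (f11 x t z * f32 x t z - f31 x t z * f12 x t z)
        + 2 * b x t z * (η * f32 x t z - f31 x t z * f22 x t z) = 0) :
    ∀ i ≤ l, ∀ x t z,
      pZ i a x t z = 0 ∧ pZ i b x t z = 0 ∧ pZ i c x t z = 0 :=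
  universal_second_fundamental_form_general k l hk η hη F f11 f31 f12 f22 f32 a b c hF hFzk hf11
    hf31 hf12 hf32 hf22 hΔ12 hstruct1 hstruct2 hstruct3 ha hb hc hGauss hCod1 hCod2
end

section
/- Let k ≥ 2, η ≠ 0, and let F be a smooth function of (z₀,…,z_k) with ∂F/∂z_k nowhere vanishing. Let f₁₁, f₃₁ be smooth functions of z₀, f₂₁ = η, f₁₂ and f₃₂ smooth functions of (z₀,…,z_{k−1}), and f₂₂ a smooth function of (z₀,…,z_{k−2}). Suppose a, b, c are smooth functions of (x,t,z₀,…,z_l) satisfying identically the two Codazzi equations f₁₁D_t a + ηD_t b − f₁₂D_x a − f₂₂D_x b − 2bΔ₁₃ + (a−c)Δ₂₃ = 0 and f₁₁D_t b + ηD_t c − f₁₂D_x b − f₂₂D_x c + (a−c)Δ₁₃ + 2bΔ₂₃ = 0. Then, by differentiating these identities with respect to the top jet variable z_{l+k}, one obtains ∂b/∂z_l = −(f₁₁/η) ∂a/∂z_l and ∂c/∂z_l = (f₁₁/η)² ∂a/∂z_l. -/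
open scoped BigOperators

/-- `f x t z` depends only on `x`, `t` and the coordinates `z 0, …, z m`. -/
def DepOn (m : ℕ) (f : JetFun) : Prop :=
  ∀ x t (z w : ℕ → ℝ), (∀ i, i ≤ m → z i = w i) → f x t z = f x t w

lemma SmoothJet.depOn {m : ℕ} {f : JetFun} (h : SmoothJet m f) : DepOn m f := by
  obtain ⟨g, -, hg⟩ := h
  intro x t z w hzw
  have : (fun i : Fin (m + 1) => z i.1) = fun i : Fin (m + 1) => w i.1 :=
    funext fun i => hzw i.1 (Nat.lt_succ_iff.mp i.2)
  rw [hg, hg, this]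

lemma SmoothZ.depOn {m : ℕ} {f : JetFun} (h : SmoothZ m f) : DepOn m f := by
  obtain ⟨g, -, hg⟩ := h
  intro x t z w hzw
  have : (fun i : Fin (m + 1) => z i.1) = fun i : Fin (m + 1) => w i.1 :=
    funext fun i => hzw i.1 (Nat.lt_succ_iff.mp i.2)
  rw [hg, hg, this]

lemma depOn_update {m : ℕ} {f : JetFun} (h : DepOn m f) {j : ℕ} (hj : m < j)
    (x t : ℝ) (z : ℕ → ℝ) (s : ℝ) : f x t (Function.update z j s) = f x t z :=
  h x t _ _ fun i hi => Function.update_of_ne (by omega) _ _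

lemma pZ_eq_zero {m : ℕ} {f : JetFun} (h : DepOn m f) {j : ℕ} (hj : m < j)
    (x t : ℝ) (z : ℕ → ℝ) : pZ j f x t z = 0 := by
  unfold pZ
  have : (fun s => f x t (Function.update z j s)) = fun _ => f x t z :=
    funext fun s => depOn_update h hj x t z s
  rw [this, deriv_const]

lemma pZ_congr {m : ℕ} {f : JetFun} (h : DepOn m f) {i : ℕ} (hi : i ≤ m) (x t : ℝ)
    {z w : ℕ → ℝ} (hzw : ∀ p, p ≤ m → z p = w p) : pZ i f x t z = pZ i f x t w := by
  unfold pZ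
  rw [hzw i hi]
  congr 1
  funext s
  apply h
  intro p hp
  by_cases hpi : p = i
  · subst hpi; simp
  · rw [Function.update_of_ne hpi, Function.update_of_ne hpi]; exact hzw p hp

lemma pX_congr {m : ℕ} {f : JetFun} (h : DepOn m f) (x t : ℝ)
    {z w : ℕ → ℝ} (hzw : ∀ p, p ≤ m → z p = w p) : pX f x t z = pX f x t w := by
  unfold pX
  congr 1
  funext s
  exact h s t z w hzw

lemma pT_congr {m : ℕ} {f : JetFun} (h : DepOn m f) (x t : ℝ)
    {z w : ℕ → ℝ} (hzw : ∀ p, p ≤ m → z p = w p) : pT f x t z = pT f x t w := by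
  unfold pT
  congr 1
  funext s
  exact h x s z w hzw

lemma DX_congr {m : ℕ} {f : JetFun} (h : DepOn m f) (x t : ℝ)
    {z w : ℕ → ℝ} (hzw : ∀ p, p ≤ m + 1 → z p = w p) : DX f x t z = DX f x t w := by
  unfold DX
  rw [pX_congr h x t (fun p hp => hzw p (Nat.le_succ_of_le hp))]
  congr 1
  apply tsum_congr
  intro i
  by_cases him : i ≤ m
  · rw [hzw (i + 1) (by omega), pZ_congr h him x t (fun p hp => hzw p (by omega))]
  · rw [pZ_eq_zero h (by omega), pZ_eq_zero h (by omega), mul_zero, mul_zero]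

lemma pZ_DX {m : ℕ} {f : JetFun} (h : DepOn m f) (x t : ℝ) (z : ℕ → ℝ) :
    pZ (m + 1) (DX f) x t z = pZ m f x t z := by
  have key : (fun s : ℝ => DX f x t (Function.update z (m + 1) s)) =
      fun s => (pX f x t z + ∑ i ∈ Finset.range m, z (i + 1) * pZ i f x t z) +
        s * pZ m f x t z := by
    funext s
    have hup : ∀ p, p ≤ m → Function.update z (m + 1) s p = z p :=
      fun p hp => Function.update_of_ne (by omega) _ _
    have h0 : ∀ i ∉ Finset.range (m + 1),
        Function.update z (m + 1) s (i + 1) * pZ i f x t (Function.update z (m + 1) s) = 0 := by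
      intro i hi
      have : m < i := by simpa using hi
      rw [pZ_eq_zero h this, mul_zero]
    have hterm : ∀ i ∈ Finset.range m,
        Function.update z (m + 1) s (i + 1) * pZ i f x t (Function.update z (m + 1) s) =
          z (i + 1) * pZ i f x t z := by
      intro i hi
      have him : i < m := Finset.mem_range.mp hi
      rw [Function.update_of_ne (by omega), pZ_congr h (by omega) x t hup]
    simp only [DX]
    rw [pX_congr h x t hup, tsum_eq_sum h0, Finset.sum_range_succ,
      Function.update_self, pZ_congr h le_rfl x t hup, Finset.sum_congr rfl hterm]
    ring
  have hrfl : pZ (m + 1) (DX f) x t z =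
      deriv (fun s => DX f x t (Function.update z (m + 1) s)) (z (m + 1)) := rfl
  rw [hrfl, key]
  have hd := ((hasDerivAt_id (z (m + 1))).mul_const (pZ m f x t z)).const_add
    (pX f x t z + ∑ i ∈ Finset.range m, z (i + 1) * pZ i f x t z)
  simpa using hd.deriv

lemma iter_DX {F : JetFun} {k : ℕ} (hF : DepOn k F) :
    ∀ n, DepOn (k + n) (DX^[n] F) ∧
      ∀ x t z, pZ (k + n) (DX^[n] F) x t z = pZ k F x t z := by
  intro n
  induction n with
  | zero => exact ⟨hF, fun _ _ _ => rfl⟩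
  | succ n ih =>
    have hdep : DepOn (k + n + 1) (DX^[n + 1] F) := by
      rw [Function.iterate_succ_apply']
      intro x t z w hzw
      exact DX_congr ih.1 x t hzw
    refine ⟨hdep, fun x t z => ?_⟩
    rw [show k + (n + 1) = (k + n) + 1 from rfl, Function.iterate_succ_apply',
      pZ_DX ih.1, ih.2]

lemma DT_update {F : JetFun} {k l : ℕ} (hk : 1 ≤ k) (hF : DepOn k F)
    {f : JetFun} (hf : DepOn l f) (x t : ℝ) (z : ℕ → ℝ) (s : ℝ) :
    DT F f x t (Function.update z (l + k) s) =
      DT F f x t z +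
        ((DX^[l] F) x t (Function.update z (l + k) s) - (DX^[l] F) x t z) *
          pZ l f x t z := by
  set w := Function.update z (l + k) s with hw
  have hup : ∀ p, p ≤ l → w p = z p := fun p hp => Function.update_of_ne (by omega) _ _
  unfold DT
  have hsum : ∀ v : ℕ → ℝ, ∀ i ∉ Finset.range (l + 1),
      (DX^[i] F) x t v * pZ i f x t v = 0 := by
    intro v i hi
    have : l < i := by simpa using hi
    rw [pZ_eq_zero hf this, mul_zero]
  rw [pT_congr hf x t hup, tsum_eq_sum (hsum w), tsum_eq_sum (hsum z),
    Finset.sum_range_succ, Finset.sum_range_succ]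
  have hterm : ∀ i ∈ Finset.range l,
      (DX^[i] F) x t w * pZ i f x t w = (DX^[i] F) x t z * pZ i f x t z := by
    intro i hi
    have hil : i < l := Finset.mem_range.mp hi
    rw [pZ_congr hf (le_of_lt hil) x t hup,
      depOn_update (iter_DX hF i).1 (by omega) x t z s]
  rw [Finset.sum_congr rfl hterm, pZ_congr hf le_rfl x t hup]
  ring

/-- differentiating the Codazzi equations with respect to the top jet
variable `z_{l+k}` yields `b_{z_l} = -(f₁₁/η) a_{z_l}` and `c_{z_l} = (f₁₁/η)² a_{z_l}`. -/
theorem codazzi_top_order_relations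
    (k l : ℕ) (hk : 2 ≤ k) (η : ℝ) (hη : η ≠ 0)
    (F f11 f31 f12 f22 f32 a b c : JetFun)
    (hF : SmoothZ k F)
    (hFzk : ∀ x t z, pZ k F x t z ≠ 0)
    (hf11 : SmoothZ 0 f11) (hf31 : SmoothZ 0 f31)
    (hf12 : SmoothZ (k - 1) f12) (hf32 : SmoothZ (k - 1) f32)
    (hf22 : SmoothZ (k - 2) f22)
    (ha : SmoothJet l a) (hb : SmoothJet l b) (hc : SmoothJet l c)
    (hCod1 : ∀ x t z,
      f11 x t z * DT F a x t z + η * DT F b x t z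
        - f12 x t z * DX a x t z - f22 x t z * DX b x t z
        - 2 * b x t z * (f11 x t z * f32 x t z - f31 x t z * f12 x t z)
        + (a x t z - c x t z) * (η * f32 x t z - f31 x t z * f22 x t z) = 0)
    (hCod2 : ∀ x t z,
      f11 x t z * DT F b x t z + η * DT F c x t z
        - f12 x t z * DX b x t z - f22 x t z * DX c x t z
        + (a x t z - c x t z) * (f11 x t z * f32 x t z - f31 x t z * f12 x t z)
        + 2 * b x t z * (η * f32 x t z - f31 x t z * f22 x t z) = 0) :
    ∀ x t z,
      pZ l b x t z = -(f11 x t z / η) * pZ l a x t z ∧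
      pZ l c x t z = (f11 x t z / η) ^ 2 * pZ l a x t z := by
  intro x t z
  have hdF := hF.depOn
  have da := ha.depOn
  have db := hb.depOn
  have dc := hc.depOn
  have d11 := hf11.depOn
  have d31 := hf31.depOn
  have d12 := hf12.depOn
  have d32 := hf32.depOn
  have d22 := hf22.depOn
  set w : ℝ → ℕ → ℝ := fun s => Function.update z (l + k) s with hw
  have hupd : ∀ (m : ℕ) (g : JetFun), DepOn m g → m < l + k →
      ∀ s, g x t (w s) = g x t z := fun m g hg hm s => depOn_update hg hm x t z s
  have ha' : ∀ s, a x t (w s) = a x t z := hupd l a da (by omega)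
  have hb' : ∀ s, b x t (w s) = b x t z := hupd l b db (by omega)
  have hc' : ∀ s, c x t (w s) = c x t z := hupd l c dc (by omega)
  have h11 : ∀ s, f11 x t (w s) = f11 x t z := hupd 0 f11 d11 (by omega)
  have h31 : ∀ s, f31 x t (w s) = f31 x t z := hupd 0 f31 d31 (by omega)
  have h12 : ∀ s, f12 x t (w s) = f12 x t z := hupd (k - 1) f12 d12 (by omega)
  have h32 : ∀ s, f32 x t (w s) = f32 x t z := hupd (k - 1) f32 d32 (by omega)
  have h22 : ∀ s, f22 x t (w s) = f22 x t z := hupd (k - 2) f22 d22 (by omega)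
  have hDXup : ∀ {g : JetFun}, DepOn l g → ∀ s, DX g x t (w s) = DX g x t z := by
    intro g hg s
    exact DX_congr hg x t fun p hp => Function.update_of_ne (by omega) _ _
  have hDTup : ∀ {g : JetFun}, DepOn l g → ∀ s, DT F g x t (w s) =
      DT F g x t z + ((DX^[l] F) x t (w s) - (DX^[l] F) x t z) * pZ l g x t z :=
    fun {g} hg s => DT_update (by omega) hdF hg x t z s
  -- the coefficients
  set K1 : ℝ := f11 x t z * pZ l a x t z + η * pZ l b x t z with hK1def
  set K2 : ℝ := f11 x t z * pZ l b x t z + η * pZ l c x t z with hK2def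
  have hΔ1 : ∀ s, ((DX^[l] F) x t (w s) - (DX^[l] F) x t z) * K1 = 0 := by
    intro s
    have e1 := hCod1 x t (w s)
    rw [h11 s, h12 s, h22 s, h31 s, h32 s, ha' s, hb' s, hc' s,
      hDTup da s, hDTup db s, hDXup da s, hDXup db s] at e1
    have e0 := hCod1 x t z
    rw [hK1def]
    linear_combination e1 - e0
  have hΔ2 : ∀ s, ((DX^[l] F) x t (w s) - (DX^[l] F) x t z) * K2 = 0 := by
    intro s
    have e1 := hCod2 x t (w s)
    rw [h11 s, h12 s, h22 s, h31 s, h32 s, ha' s, hb' s, hc' s,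
      hDTup db s, hDTup dc s, hDXup db s, hDXup dc s] at e1
    have e0 := hCod2 x t z
    rw [hK2def]
    linear_combination e1 - e0
  have hnotconst : ¬ (∀ s, (DX^[l] F) x t (w s) = (DX^[l] F) x t z) := by
    intro hconst
    have h0 : pZ (l + k) (DX^[l] F) x t z = 0 := by
      have hrfl : pZ (l + k) (DX^[l] F) x t z =
          deriv (fun s => (DX^[l] F) x t (Function.update z (l + k) s)) (z (l + k)) := rfl
      rw [hrfl]
      have : (fun s => (DX^[l] F) x t (Function.update z (l + k) s)) =
          fun _ => (DX^[l] F) x t z := funext hconst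
      rw [this, deriv_const]
    rw [Nat.add_comm l k, (iter_DX hdF l).2 x t z] at h0
    exact hFzk x t z h0
  have hK : K1 = 0 ∧ K2 = 0 := by
    by_cases h1 : K1 = 0
    · refine ⟨h1, ?_⟩
      by_contra h2
      exact hnotconst fun s => by
        have := hΔ2 s
        rcases mul_eq_zero.mp this with h | h
        · linarith [h]
        · exact absurd h h2
    · exfalso
      exact hnotconst fun s => by
        have := hΔ1 s
        rcases mul_eq_zero.mp this with h | h
        · linarith [h]
        · exact absurd h h1
  obtain ⟨hK1, hK2⟩ := hK
  rw [hK1def] at hK1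
  rw [hK2def] at hK2
  constructor
  · field_simp
    linear_combination hK1
  · field_simp
    linear_combination η * hK2 - f11 x t z * hK1
end

section
/- Let k ≥ 2, η ≠ 0, ε = ±1, let F be a smooth function of (z₀,…,z_k), let f₁₁ be a smooth function of z₀, f₁₂ and f₃₂ smooth functions of (z₀,…,z_{k−1}), f₂₂ a smooth function of (z₀,…,z_{k−2}), with Δ₁₂ := f₁₁f₂₂ − ηf₁₂ nowhere vanishing. Let a be a smooth function of (x,t,z₀,…,z_l) with l ≥ k, and set b = ε − (f₁₁/η)a and c = (f₁₁/η)²a − 2ε f₁₁/η. If the identity −a f₁₁' F + (Δ₁₂/η)(a_x + Σ_{i=0}^l a_{z_i} z_{i+1}) + (a f₂₂/η) f₁₁' z₁ − 2bΔ₁₃ + (a−c)Δ₂₃ = 0 holds identically in the jet variables (where f₁₁' = ∂f₁₁/∂z₀, Δ₁₃ = f₁₁f₃₂ − f₃₁f₁₂, Δ₂₃ = ηf₃₂ − f₃₁f₂₂, with f₃₁ a smooth function of z₀), then ∂a/∂z_l = 0, and consequently ∂b/∂z_l = ∂c/∂z_l = 0. -/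
open scoped BigOperators

/-!
Every term of the identity except the total derivative of `a` depends on jet variables of order
at most `l`, and in the total derivative `z_{l+1}` occurs only in `a_{z_l} z_{l+1}`. So the left
side is affine in `z_{l+1}` with slope `(Δ₁₂/η) a_{z_l}`; an affine function vanishing
identically has zero slope, and `Δ₁₂ ≠ 0`. Finally `b` and `c` are affine in `a` with
coefficients depending on `z₀` only, and `l ≥ k ≥ 2`.
-/

open Finset Function

lemma SmoothZ.smoothJet {m : ℕ} {f : JetFun} (h : SmoothZ m f) : SmoothJet m f := by
  obtain ⟨g, hg, hfg⟩ := h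
  exact ⟨fun p => g p.2.2, hg.comp (contDiff_snd.comp contDiff_snd), hfg⟩

namespace SmoothJet

variable {m j : ℕ} {f : JetFun}

lemma apply_update_of_lt (h : SmoothJet m f) (hj : m < j) (x t : ℝ) (z : ℕ → ℝ) (s : ℝ) :
    f x t (update z j s) = f x t z := by
  obtain ⟨g, -, hfg⟩ := h
  rw [hfg, hfg]
  congr 3
  funext i
  exact update_of_ne (by omega) _ _

lemma pZ_update_of_lt (h : SmoothJet m f) {i : ℕ} (hi : i ≤ m) (hj : m < j) (x t : ℝ)
    (z : ℕ → ℝ) (s : ℝ) : pZ i f x t (update z j s) = pZ i f x t z := by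
  have hij : i ≠ j := by omega
  unfold pZ
  rw [update_of_ne hij]
  congr 1
  funext r
  rw [update_comm (Ne.symm hij), h.apply_update_of_lt hj]

lemma pX_update_of_lt (h : SmoothJet m f) (hj : m < j) (x t : ℝ) (z : ℕ → ℝ) (s : ℝ) :
    pX f x t (update z j s) = pX f x t z := by
  unfold pX
  simp only [h.apply_update_of_lt hj]

lemma sum_pZ_mul_update_succ (h : SmoothJet m f) (x t : ℝ) (z : ℕ → ℝ) (s : ℝ) :
    ∑ i ∈ range (m + 1), pZ i f x t (update z (m + 1) s) * update z (m + 1) s (i + 1)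
      = ∑ i ∈ range m, pZ i f x t z * z (i + 1) + pZ m f x t z * s := by
  rw [sum_range_succ, update_self, h.pZ_update_of_lt le_rfl (by omega)]
  congr 1
  refine sum_congr rfl fun i hi => ?_
  rw [mem_range] at hi
  rw [h.pZ_update_of_lt (by omega) (by omega), update_of_ne (by omega)]

end SmoothJet

lemma pZ_eq_mul_pZ_of_eq_add_mul {i : ℕ} {f g p q : JetFun}
    (hp : ∀ x t z s, p x t (update z i s) = p x t z)
    (hq : ∀ x t z s, q x t (update z i s) = q x t z)
    (hf : ∀ x t z, f x t z = p x t z + q x t z * g x t z) (x t : ℝ) (z : ℕ → ℝ) :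
    pZ i f x t z = q x t z * pZ i g x t z := by
  unfold pZ
  simp only [hf, hp, hq]
  rw [deriv_const_add, deriv_const_mul_field]

theorem case_l_ge_k_top_derivative_vanishes_general
    (k l : ℕ) (hk : 2 ≤ k) (hlk : k ≤ l) (η ε : ℝ) (hη : η ≠ 0)
    (F f11 f31 f12 f22 f32 a b c : JetFun)
    (hF : SmoothZ k F)
    (hf11 : SmoothZ 0 f11) (hf31 : SmoothZ 0 f31)
    (hf12 : SmoothZ (k - 1) f12) (hf32 : SmoothZ (k - 1) f32)
    (hf22 : SmoothZ (k - 2) f22)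
    (hΔ12 : ∀ x t z, f11 x t z * f22 x t z - η * f12 x t z ≠ 0)
    (ha : SmoothJet l a)
    (hbdef : ∀ x t z, b x t z = ε - f11 x t z / η * a x t z)
    (hcdef : ∀ x t z, c x t z = (f11 x t z / η) ^ 2 * a x t z - 2 * ε * (f11 x t z / η))
    (hid : ∀ x t z,
      -(a x t z) * pZ 0 f11 x t z * F x t z
        + (f11 x t z * f22 x t z - η * f12 x t z) / η
            * (pX a x t z + ∑ i ∈ Finset.range (l + 1), pZ i a x t z * z (i + 1))
        + a x t z * f22 x t z / η * pZ 0 f11 x t z * z 1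
        - 2 * b x t z * (f11 x t z * f32 x t z - f31 x t z * f12 x t z)
        + (a x t z - c x t z) * (η * f32 x t z - f31 x t z * f22 x t z) = 0) :
    ∀ x t z, pZ l a x t z = 0 ∧ pZ l b x t z = 0 ∧ pZ l c x t z = 0 := by
  intro x t z
  simp only [hbdef, hcdef] at hid
  have hpa : pZ l a x t z = 0 := by
    have indep {m : ℕ} {f : JetFun} (hf : SmoothZ m f) (hm : m ≤ l) :=
      hf.smoothJet.apply_update_of_lt (j := l + 1) (by omega)
    have H := hid x t (update z (l + 1) (z (l + 1) + 1))
    rw [ha.sum_pZ_mul_update_succ] at H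
    simp only [indep hF hlk, indep hf11 (by omega), indep hf31 (by omega),
      indep hf12 (by omega), indep hf32 (by omega), indep hf22 (by omega),
      ha.apply_update_of_lt (Nat.lt_succ_self l), ha.pX_update_of_lt (Nat.lt_succ_self l),
      hf11.smoothJet.pZ_update_of_lt le_rfl (by omega : 0 < l + 1),
      update_of_ne (by omega : 1 ≠ l + 1)] at H
    have H0 := hid x t z
    rw [sum_range_succ] at H0
    have hslope : (f11 x t z * f22 x t z - η * f12 x t z) / η * pZ l a x t z = 0 := by
      linear_combination H - H0
    exact (mul_eq_zero.mp hslope).resolve_left (div_ne_zero (hΔ12 x t z) hη)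
  have hf11_l : ∀ x t z s, f11 x t (update z l s) = f11 x t z :=
    hf11.smoothJet.apply_update_of_lt (by omega)
  refine ⟨hpa, ?_, ?_⟩
  · rw [pZ_eq_mul_pZ_of_eq_add_mul (g := a) (p := fun _ _ _ => ε)
      (q := fun x t z => -(f11 x t z / η)) (fun _ _ _ _ => rfl)
      (by simp only [hf11_l, implies_true])
      (fun x t z => by rw [hbdef]; ring), hpa, mul_zero]
  · rw [pZ_eq_mul_pZ_of_eq_add_mul (g := a) (p := fun x t z => -(2 * ε * (f11 x t z / η)))
      (q := fun x t z => (f11 x t z / η) ^ 2) (by simp only [hf11_l, implies_true])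
      (by simp only [hf11_l, implies_true]) (fun x t z => by rw [hcdef]; ring), hpa, mul_zero]

/-- case `l ≥ k`: differentiating the rewritten first Codazzi identity with
respect to `z_{l+1}` yields `a_{z_l} = 0`, and consequently `b_{z_l} = c_{z_l} = 0`. -/
theorem case_l_ge_k_top_derivative_vanishes
    (k l : ℕ) (hk : 2 ≤ k) (hlk : k ≤ l) (η ε : ℝ) (hη : η ≠ 0) (hε : ε = 1 ∨ ε = -1)
    (F f11 f31 f12 f22 f32 a b c : JetFun)
    (hF : SmoothZ k F)
    (hf11 : SmoothZ 0 f11) (hf31 : SmoothZ 0 f31)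
    (hf12 : SmoothZ (k - 1) f12) (hf32 : SmoothZ (k - 1) f32)
    (hf22 : SmoothZ (k - 2) f22)
    (hΔ12 : ∀ x t z, f11 x t z * f22 x t z - η * f12 x t z ≠ 0)
    (ha : SmoothJet l a)
    (hbdef : ∀ x t z, b x t z = ε - f11 x t z / η * a x t z)
    (hcdef : ∀ x t z, c x t z = (f11 x t z / η) ^ 2 * a x t z - 2 * ε * (f11 x t z / η))
    (hid : ∀ x t z,
      -(a x t z) * pZ 0 f11 x t z * F x t z
        + (f11 x t z * f22 x t z - η * f12 x t z) / η
            * (pX a x t z + ∑ i ∈ Finset.range (l + 1), pZ i a x t z * z (i + 1))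
        + a x t z * f22 x t z / η * pZ 0 f11 x t z * z 1
        - 2 * b x t z * (f11 x t z * f32 x t z - f31 x t z * f12 x t z)
        + (a x t z - c x t z) * (η * f32 x t z - f31 x t z * f22 x t z) = 0) :
    ∀ x t z, pZ l a x t z = 0 ∧ pZ l b x t z = 0 ∧ pZ l c x t z = 0 :=
  case_l_ge_k_top_derivative_vanishes_general k l hk hlk η ε hη F f11 f31 f12 f22 f32 a b c hF hf11
    hf31 hf12 hf32 hf22 hΔ12 ha hbdef hcdef hid
end

section
/- Let η ≠ 0 be real and let u : ℝ² → ℝ be a smooth function of (x,t). Define f₁₁ = 0, f₁₂ = (1/η) sin u, f₂₁ = η, f₂₂ = (1/η) cos u, f₃₁ = u_x, f₃₂ = 0. Then the first two structure-equation identities ∂_x f₁₂ − ∂_t f₁₁ = f₃₁f₂₂ − f₃₂f₂₁ and ∂_x f₂₂ − ∂_t f₂₁ = f₁₁f₃₂ − f₁₂f₃₁ hold identically for every smooth u, while the third identity ∂_x f₃₂ − ∂_t f₃₁ = f₁₁f₂₂ − f₁₂f₂₁ holds at a point if and only if u_{xt} = sin u at that point. Hence the 1-forms ω¹ = (1/η)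 sin u dt, ω² = η dx + (1/η) cos u dt, ω³ = u_x dx satisfy the structure equations dω¹ = ω³∧ω², dω² = ω¹∧ω³, dω³ = ω¹∧ω² exactly when u is a solution of the sine-Gordon equation u_{xt} = sin u. -/
/-! The first two identities are the chain rule for `sin u` and `cos u` in `x`, which needs only
differentiability of the `x`-sections of `u`; the `t`-derivatives of the constant coefficients
vanish.  In the third identity the `η` of `f₂₁` cancels the `1/η` of `f₁₂`, which leaves exactly
`-u_{xt} = -sin u`. -/

theorem ContDiff.differentiableAt_left_section {𝕜 E F G : Type*} [NontriviallyNormedField 𝕜]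
    [NormedAddCommGroup E] [NormedSpace 𝕜 E] [NormedAddCommGroup F] [NormedSpace 𝕜 F]
    [NormedAddCommGroup G] [NormedSpace 𝕜 G] {n : WithTop ℕ∞} {u : E → F → G}
    (hu : ContDiff 𝕜 n (fun p : E × F => u p.1 p.2)) (hn : n ≠ 0) (x : E) (t : F) :
    DifferentiableAt 𝕜 (fun s => u s t) x :=
  ((hu.differentiable hn).comp (differentiable_id.prodMk (differentiable_const t))).differentiableAt

/-- for `f₁₁ = 0`, `f₁₂ = (1/η) sin u`, `f₂₁ = η`, `f₂₂ = (1/η) cos u`,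
`f₃₁ = u_x`, `f₃₂ = 0`, the first two structure-equation identities hold for every smooth `u`,
while the third holds at a point if and only if `u_{xt} = sin u` there: the associated
`1`-forms satisfy the structure equations exactly for solutions of sine-Gordon. -/
theorem sine_gordon_first_family
    (η : ℝ) (hη : η ≠ 0) (u : ℝ → ℝ → ℝ)
    (hu : ContDiff ℝ (⊤ : ℕ∞) (fun p : ℝ × ℝ => u p.1 p.2)) :
    (∀ x t : ℝ,
      deriv (fun s => 1 / η * Real.sin (u s t)) x - deriv (fun _ : ℝ => (0 : ℝ)) t
        = deriv (fun s => u s t) x * (1 / η * Real.cos (u x t)) - 0 * η) ∧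
    (∀ x t : ℝ,
      deriv (fun s => 1 / η * Real.cos (u s t)) x - deriv (fun _ : ℝ => η) t
        = 0 * 0 - 1 / η * Real.sin (u x t) * deriv (fun s => u s t) x) ∧
    (∀ x t : ℝ,
      (deriv (fun _ : ℝ => (0 : ℝ)) x - deriv (fun s => deriv (fun r => u r s) x) t
          = 0 * (1 / η * Real.cos (u x t)) - 1 / η * Real.sin (u x t) * η)
        ↔ deriv (fun s => deriv (fun r => u r s) x) t = Real.sin (u x t)) := by
  have hx (x t : ℝ) : DifferentiableAt ℝ (fun s => u s t) x :=
    hu.differentiableAt_left_section (by simp) x t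
  refine ⟨fun x t => ?_, fun x t => ?_, fun x t => ?_⟩
  · rw [deriv_const_mul _ (hx x t).sin, deriv_sin (hx x t), deriv_const]
    ring
  · rw [deriv_const_mul _ (hx x t).cos, deriv_cos (hx x t), deriv_const]
    ring
  · have hcancel : 1 / η * Real.sin (u x t) * η = Real.sin (u x t) := by
      field_simp
    rw [deriv_const, hcancel, zero_mul, zero_sub, zero_sub, neg_inj]
end

section
/- Let u : ℝ² → ℝ be a smooth function of (x,t). Define f₁₁ = cos(u/2), f₁₂ = cos(u/2), f₂₁ = sin(u/2), f₂₂ = −sin(u/2), f₃₁ = u_x/2, f₃₂ = −u_t/2. Then the first two structure-equation identities ∂_x f₁₂ − ∂_t f₁₁ = f₃₁f₂₂ − f₃₂f₂₁ and ∂_x f₂₂ − ∂_t f₂₁ = f₁₁f₃₂ − f₁₂f₃₁ hold identically for every smooth u, while the third identity ∂_x f₃₂ − ∂_t f₃₁ = f₁₁f₂₂ − f₁₂f₂₁ holds at a point if and only if u_{xt} = sin u at that point. Hence the 1-forms ω¹ = cos(u/2)(dx+dt), ω² = sin(u/2)(dx−dt), ω³ = (u_x/2)dx − (u_t/2)dt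 satisfy the structure equations exactly when u is a solution of the sine-Gordon equation u_{xt} = sin u. -/
/-! The first two identities are the chain rule applied to `cos (u / 2)` and `sin (u / 2)`.
In the third, Schwarz's theorem `u_tx = u_xt` turns the left-hand side into `-u_xt`, while the
right-hand side is `-2 sin (u / 2) cos (u / 2) = -sin u`. -/

section SliceDerivatives

variable {E : Type*} [NormedAddCommGroup E] [NormedSpace ℝ E] {f : ℝ × ℝ → E} {x t : ℝ}

theorem DifferentiableAt.hasDerivAt_slice_fst (hf : DifferentiableAt ℝ f (x, t)) :
    HasDerivAt (fun s => f (s, t)) (fderiv ℝ f (x, t) (1, 0)) x :=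
  hf.hasFDerivAt.comp_hasDerivAt x ((hasDerivAt_id' x).prodMk (hasDerivAt_const x t))

theorem DifferentiableAt.hasDerivAt_slice_snd (hf : DifferentiableAt ℝ f (x, t)) :
    HasDerivAt (fun s => f (x, s)) (fderiv ℝ f (x, t) (0, 1)) t :=
  hf.hasFDerivAt.comp_hasDerivAt t ((hasDerivAt_const t x).prodMk (hasDerivAt_id' t))

theorem ContDiff.deriv_slice_snd_deriv_slice_fst (hf : ContDiff ℝ 2 f) :
    deriv (fun s => deriv (fun r => f (r, s)) x) t =
      fderiv ℝ (fderiv ℝ f) (x, t) (0, 1) (1, 0) := by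
  have hdiff : Differentiable ℝ f := hf.differentiable two_ne_zero
  have hdiff' : Differentiable ℝ (fderiv ℝ f) :=
    (hf.fderiv_right le_rfl).differentiable one_ne_zero
  have hx : (fun s => deriv (fun r => f (r, s)) x) = fun s => fderiv ℝ f (x, s) (1, 0) :=
    funext fun s => (hdiff (x, s)).hasDerivAt_slice_fst.deriv
  rw [hx]
  simpa using ((hdiff' (x, t)).hasDerivAt_slice_snd.clm_apply (hasDerivAt_const t _)).deriv

theorem ContDiff.deriv_slice_fst_deriv_slice_snd (hf : ContDiff ℝ 2 f) :
    deriv (fun s => deriv (fun r => f (s, r)) t) x =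
      fderiv ℝ (fderiv ℝ f) (x, t) (1, 0) (0, 1) := by
  have hdiff : Differentiable ℝ f := hf.differentiable two_ne_zero
  have hdiff' : Differentiable ℝ (fderiv ℝ f) :=
    (hf.fderiv_right le_rfl).differentiable one_ne_zero
  have ht : (fun s => deriv (fun r => f (s, r)) t) = fun s => fderiv ℝ f (s, t) (0, 1) :=
    funext fun s => (hdiff (s, t)).hasDerivAt_slice_snd.deriv
  rw [ht]
  simpa using ((hdiff' (x, t)).hasDerivAt_slice_fst.clm_apply (hasDerivAt_const x _)).deriv

theorem ContDiff.deriv_slice_deriv_slice_comm (hf : ContDiff ℝ 2 f) :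
    deriv (fun s => deriv (fun r => f (r, s)) x) t =
      deriv (fun s => deriv (fun r => f (s, r)) t) x := by
  rw [hf.deriv_slice_snd_deriv_slice_fst, hf.deriv_slice_fst_deriv_slice_snd,
    (hf.contDiffAt.isSymmSndFDerivAt (by simp)).eq]

end SliceDerivatives

/-- for `f₁₁ = f₁₂ = cos(u/2)`, `f₂₁ = sin(u/2)`, `f₂₂ = -sin(u/2)`,
`f₃₁ = u_x/2`, `f₃₂ = -u_t/2`, the first two structure-equation identities hold for every
smooth `u`, while the third holds at a point if and only if `u_{xt} = sin u` there. -/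
theorem sine_gordon_second_family
    (u : ℝ → ℝ → ℝ)
    (hu : ContDiff ℝ (⊤ : ℕ∞) (fun p : ℝ × ℝ => u p.1 p.2)) :
    (∀ x t : ℝ,
      deriv (fun s => Real.cos (u s t / 2)) x - deriv (fun s => Real.cos (u x s / 2)) t
        = deriv (fun s => u s t) x / 2 * (-Real.sin (u x t / 2))
          - (-(deriv (fun s => u x s) t) / 2) * Real.sin (u x t / 2)) ∧
    (∀ x t : ℝ,
      deriv (fun s => -Real.sin (u s t / 2)) x - deriv (fun s => Real.sin (u x s / 2)) t
        = Real.cos (u x t / 2) * (-(deriv (fun s => u x s) t) / 2)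
          - Real.cos (u x t / 2) * (deriv (fun s => u s t) x / 2)) ∧
    (∀ x t : ℝ,
      (deriv (fun s => -(deriv (fun r => u s r) t) / 2) x
          - deriv (fun s => deriv (fun r => u r s) x / 2) t
          = Real.cos (u x t / 2) * (-Real.sin (u x t / 2))
            - Real.cos (u x t / 2) * Real.sin (u x t / 2))
        ↔ deriv (fun s => deriv (fun r => u r s) x) t = Real.sin (u x t)) := by
  have hdiff : Differentiable ℝ (fun p : ℝ × ℝ => u p.1 p.2) := hu.differentiable (by simp)
  have hux (x t : ℝ) : HasDerivAt (fun s => u s t) (deriv (fun s => u s t) x) x :=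
    (hdiff (x, t)).hasDerivAt_slice_fst.differentiableAt.hasDerivAt
  have hut (x t : ℝ) : HasDerivAt (fun s => u x s) (deriv (fun s => u x s) t) t :=
    (hdiff (x, t)).hasDerivAt_slice_snd.differentiableAt.hasDerivAt
  refine ⟨fun x t => ?_, fun x t => ?_, fun x t => ?_⟩
  · rw [((hux x t).div_const 2).cos.deriv, ((hut x t).div_const 2).cos.deriv]
    ring
  · rw [((hux x t).div_const 2).sin.fun_neg.deriv, ((hut x t).div_const 2).sin.deriv]
    ring
  · have hcomm : deriv (fun s => deriv (fun r => u s r) t) x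
        = deriv (fun s => deriv (fun r => u r s) x) t :=
      ((hu.of_le (WithTop.coe_le_coe.2 le_top)).deriv_slice_deriv_slice_comm).symm
    have hsin : Real.sin (u x t) = 2 * Real.sin (u x t / 2) * Real.cos (u x t / 2) := by
      rw [← Real.sin_two_mul, mul_div_cancel₀ _ two_ne_zero]
    rw [deriv_div_const, deriv.fun_neg, deriv_div_const, hcomm, hsin]
    constructor <;> intro h <;> linarith
end

section
/- Let u : ℝ² → ℝ be smooth and let p be a point where sin(u(p)/2) cos(u(p)/2) ≠ 0. With f₁₁ = cos(u/2), f₁₂ = cos(u/2), f₂₁ = sin(u/2), f₂₂ = −sin(u/2), f₃₁ = u_x/2, f₃₂ = −u_t/2, and with a = tan(u/2), b = 0, c = −cot(u/2), the Gauss equation ac − b² = −1 and the Codazzi equations f₁₁ ∂_t a + f₂₁ ∂_t b − f₁₂ ∂_x a − f₂₂ ∂_x b − 2bΔ₁₃ + (a−c)Δ₂₃ = 0 and f₁₁ ∂_t b + f₂₁ ∂_t c − f₁₂ ∂_x b − f₂₂ ∂_x c + (a−c)Δ₁₃ + 2bΔ₂₃ = 0 hold at p, where Δ₁₃ = f₁₁f₃₂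 − f₃₁f₁₂ and Δ₂₃ = f₂₁f₃₂ − f₃₁f₂₂. In particular, for every solution of the sine-Gordon equation u_{xt} = sin u with sin(u/2)cos(u/2) ≠ 0, the functions a = tan(u/2), b = 0, c = −cot(u/2) are the coefficients of the second fundamental form of a local isometric immersion into E³ of the associated pseudo-spherical metric, and they depend only on u. -/
/-!
The Gauss equation is `tan θ · cot θ = 1` with `θ = u/2`. For the Codazzi equations, `b = 0`
and the chain rule reduce everything to `u_x`, `u_t` and the single identity
`tan θ + cot θ = 1 / (sin θ cos θ)`; each equation then cancels termwise, so neither needs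
the sine-Gordon equation itself.
-/

open Real

theorem hasDerivAt_neg_cos_div_sin {θ : ℝ} (hθ : sin θ ≠ 0) :
    HasDerivAt (fun θ => -(cos θ / sin θ)) (1 / sin θ ^ 2) θ := by
  refine ((hasDerivAt_cos θ).fun_div (hasDerivAt_sin θ) hθ).fun_neg.congr_deriv ?_
  field_simp
  linear_combination sin_sq_add_cos_sq θ

theorem tan_sub_neg_cos_div_sin {θ : ℝ} (hs : sin θ ≠ 0) (hc : cos θ ≠ 0) :
    tan θ - -(cos θ / sin θ) = 1 / (sin θ * cos θ) := by
  rw [tan_eq_sin_div_cos]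
  field_simp
  linear_combination sin_sq_add_cos_sq θ

theorem deriv_comp_half {φ v : ℝ → ℝ} {φ' v' s : ℝ} (hv : HasDerivAt v v' s)
    (hφ : HasDerivAt φ φ' (v s / 2)) : deriv (fun r => φ (v r / 2)) s = φ' * (v' / 2) :=
  (hφ.comp s (hv.div_const 2)).deriv

section Slices

variable {𝕜 F : Type*} [NontriviallyNormedField 𝕜] [NormedAddCommGroup F] [NormedSpace 𝕜 F]
  {u : 𝕜 → 𝕜 → F} {x t : 𝕜}

theorem DifferentiableAt.hasDerivAt_slice_fst_s15
    (hu : DifferentiableAt 𝕜 (fun p : 𝕜 × 𝕜 => u p.1 p.2) (x, t)) :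
    HasDerivAt (fun s => u s t) (deriv (fun s => u s t) x) x :=
  (hu.comp (f := fun s => (s, t)) x (by fun_prop)).hasDerivAt

theorem DifferentiableAt.hasDerivAt_slice_snd_s15
    (hu : DifferentiableAt 𝕜 (fun p : 𝕜 × 𝕜 => u p.1 p.2) (x, t)) :
    HasDerivAt (fun s => u x s) (deriv (fun s => u x s) t) t :=
  (hu.comp (f := fun s => (x, s)) t (by fun_prop)).hasDerivAt

end Slices

/-- for the sine-Gordon `1`-forms `f₁₁ = f₁₂ = cos(u/2)`, `f₂₁ = sin(u/2)`,
`f₂₂ = -sin(u/2)`, `f₃₁ = u_x/2`, `f₃₂ = -u_t/2`, the functions `a = tan(u/2)`, `b = 0`,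
`c = -cot(u/2)` satisfy the Gauss equation and both Codazzi equations at every point where
`sin(u/2) cos(u/2) ≠ 0`. -/
theorem sine_gordon_second_fundamental_form
    (u : ℝ → ℝ → ℝ)
    (hu : ContDiff ℝ (⊤ : ℕ∞) (fun p : ℝ × ℝ => u p.1 p.2))
    (x t : ℝ)
    (hp : Real.sin (u x t / 2) * Real.cos (u x t / 2) ≠ 0) :
    Real.tan (u x t / 2) * (-(Real.cos (u x t / 2) / Real.sin (u x t / 2))) - (0 : ℝ) ^ 2
      = -1 ∧
    Real.cos (u x t / 2) * deriv (fun s => Real.tan (u x s / 2)) t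
      + Real.sin (u x t / 2) * deriv (fun _ : ℝ => (0 : ℝ)) t
      - Real.cos (u x t / 2) * deriv (fun s => Real.tan (u s t / 2)) x
      - (-Real.sin (u x t / 2)) * deriv (fun _ : ℝ => (0 : ℝ)) x
      - 2 * 0 * (Real.cos (u x t / 2) * (-(deriv (fun s => u x s) t) / 2)
          - deriv (fun s => u s t) x / 2 * Real.cos (u x t / 2))
      + (Real.tan (u x t / 2) - (-(Real.cos (u x t / 2) / Real.sin (u x t / 2))))
          * (Real.sin (u x t / 2) * (-(deriv (fun s => u x s) t) / 2)
            - deriv (fun s => u s t) x / 2 * (-Real.sin (u x t / 2))) = 0 ∧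
    Real.cos (u x t / 2) * deriv (fun _ : ℝ => (0 : ℝ)) t
      + Real.sin (u x t / 2)
          * deriv (fun s => -(Real.cos (u x s / 2) / Real.sin (u x s / 2))) t
      - Real.cos (u x t / 2) * deriv (fun _ : ℝ => (0 : ℝ)) x
      - (-Real.sin (u x t / 2))
          * deriv (fun s => -(Real.cos (u s t / 2) / Real.sin (u s t / 2))) x
      + (Real.tan (u x t / 2) - (-(Real.cos (u x t / 2) / Real.sin (u x t / 2))))
          * (Real.cos (u x t / 2) * (-(deriv (fun s => u x s) t) / 2)
            - deriv (fun s => u s t) x / 2 * Real.cos (u x t / 2))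
      + 2 * 0 * (Real.sin (u x t / 2) * (-(deriv (fun s => u x s) t) / 2)
          - deriv (fun s => u s t) x / 2 * (-Real.sin (u x t / 2))) = 0 := by
  obtain ⟨hs, hc⟩ := mul_ne_zero_iff.mp hp
  have hdiff : DifferentiableAt ℝ (fun p : ℝ × ℝ => u p.1 p.2) (x, t) :=
    (hu.differentiable (by simp)).differentiableAt
  have hx := hdiff.hasDerivAt_slice_fst_s15
  have ht := hdiff.hasDerivAt_slice_snd_s15
  rw [deriv_comp_half ht (hasDerivAt_tan hc), deriv_comp_half hx (hasDerivAt_tan hc),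
    deriv_comp_half ht (hasDerivAt_neg_cos_div_sin hs),
    deriv_comp_half hx (hasDerivAt_neg_cos_div_sin hs), tan_sub_neg_cos_div_sin hs hc, deriv_const,
    deriv_const, tan_eq_sin_div_cos]
  refine ⟨?_, ?_, ?_⟩ <;> field_simp <;> ring
end

section
/- Let m₀, m₁, m₂, γ, L be real numbers with m₀ ≠ 0, L > 0 and L² > 4γ². Set B = 4m₀² + 2m₀m₁ + m₂, r₀ = −4m₀²B, and h(x,t) = exp(2(−2m₀x + r₀t)). Then the open set U = {(x,t) ∈ ℝ² : L h(x,t) − γ² h(x,t)² − 1 > 0} is nonempty, and on U the functions a = √(Lh − γ²h² − 1), b = γh, c = (γ²h² − 1)/a satisfy the Gauss equation ac − b² = −1. Moreover, for every smooth function u : ℝ² → ℝ, setting φ = (m₁+2m₀)u_{xx} + Bu_x − u²/2 + 2m₀B and f₁₁ = f₃₁ = u, f₁₂ = f₃₂ = u_{xxx} + φ, f₂₁ = −2m₀, f₂₂ = r₀, the Codazzi equations f₁₁ ∂_t a + f₂₁ ∂_t b − f₁₂ ∂_x a − f₂₂ ∂_x b − 2bΔ₁₃ + (a−c)Δ₂₃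 = 0 and f₁₁ ∂_t b + f₂₁ ∂_t c − f₁₂ ∂_x b − f₂₂ ∂_x c + (a−c)Δ₁₃ + 2bΔ₂₃ = 0 hold on U, where Δ₁₃ = f₁₁f₃₂ − f₃₁f₁₂ and Δ₂₃ = f₂₁f₃₂ − f₃₁f₂₂. -/
/-- `h(x,t) = exp(2(-2m₀x + r₀t))`. -/
noncomputable def hExp (m₀ r₀ x t : ℝ) : ℝ := Real.exp (2 * (-(2 * m₀) * x + r₀ * t))

/-- `a = √(Lh - γ²h² - 1)`. -/
noncomputable def aImm (m₀ r₀ γ L x t : ℝ) : ℝ :=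
  Real.sqrt (L * hExp m₀ r₀ x t - γ ^ 2 * (hExp m₀ r₀ x t) ^ 2 - 1)

/-- `b = γh`. -/
noncomputable def bImm (m₀ r₀ γ x t : ℝ) : ℝ := γ * hExp m₀ r₀ x t

/-- `c = (γ²h² - 1)/a`. -/
noncomputable def cImm (m₀ r₀ γ L x t : ℝ) : ℝ :=
  (γ ^ 2 * (hExp m₀ r₀ x t) ^ 2 - 1) / aImm m₀ r₀ γ L x t

/-- `u_x`. -/
noncomputable def uX (u : ℝ → ℝ → ℝ) (x t : ℝ) : ℝ := deriv (fun s => u s t) x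

/-- `u_xx`. -/
noncomputable def uXX (u : ℝ → ℝ → ℝ) (x t : ℝ) : ℝ := deriv (fun s => uX u s t) x

/-- `u_xxx`. -/
noncomputable def uXXX (u : ℝ → ℝ → ℝ) (x t : ℝ) : ℝ := deriv (fun s => uXX u s t) x

/-- `φ = (m₁ + 2m₀)u_xx + Bu_x - u²/2 + 2m₀B`. -/
noncomputable def phiF (m₀ m₁ B : ℝ) (u : ℝ → ℝ → ℝ) (x t : ℝ) : ℝ :=
  (m₁ + 2 * m₀) * uXX u x t + B * uX u x t - (u x t) ^ 2 / 2 + 2 * m₀ * B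

/-- `f₁₂ = f₃₂ = u_xxx + φ`. -/
noncomputable def f12F (m₀ m₁ B : ℝ) (u : ℝ → ℝ → ℝ) (x t : ℝ) : ℝ :=
  uXXX u x t + phiF m₀ m₁ B u x t

/-!
The functions `a, b, c` depend on `(x, t)` only through `h = exp(2(-2m₀x + r₀t))`, and on such
functions `∂ₜ = 2r₀ θ` and `∂ₓ = -4m₀ θ` with `θ = h d/dh`. Since `f₁₁ = f₃₁` and `f₁₂ = f₃₂`,
`Δ₁₃ = 0`, and both Codazzi equations become `(2r₀f₁₁ + 4m₀f₁₂)` times one of `θa - (a - c)/2` and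
`θb - b`. Both vanish: `θ(γh) = γh`, and with `Q = Lh - γ²h² - 1` one has
`2θ√Q = (Lh - 2γ²h²)/√Q = √Q - (γ²h² - 1)/√Q`.
The Gauss equation is immediate, and `U` is nonempty because `Q(2/L) = 1 - 4γ²/L² > 0` while
`x ↦ h(x, 0)` maps onto `(0, ∞)` when `m₀ ≠ 0`.
-/

section ProfileCalculus

variable {m₀ r₀ x t : ℝ}

theorem hasDerivAt_hExp_x :
    HasDerivAt (fun s => hExp m₀ r₀ s t) (-(4 * m₀) * hExp m₀ r₀ x t) x :=
  (((((hasDerivAt_id' x).const_mul (-(2 * m₀))).add_const (r₀ * t)).const_mul 2).exp).congr_deriv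
    (by rw [hExp]; ring)

theorem hasDerivAt_hExp_t :
    HasDerivAt (fun s => hExp m₀ r₀ x s) (2 * r₀ * hExp m₀ r₀ x t) t :=
  (((((hasDerivAt_id' t).const_mul r₀).const_add (-(2 * m₀) * x)).const_mul 2).exp).congr_deriv
    (by rw [hExp]; ring)

theorem HasDerivAt.comp_hExp_x {g : ℝ → ℝ} {g' : ℝ} (hg : HasDerivAt g g' (hExp m₀ r₀ x t)) :
    HasDerivAt (fun s => g (hExp m₀ r₀ s t)) (-(4 * m₀) * (hExp m₀ r₀ x t * g')) x :=
  (hg.comp x hasDerivAt_hExp_x).congr_deriv (by ring)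

theorem HasDerivAt.comp_hExp_t {g : ℝ → ℝ} {g' : ℝ} (hg : HasDerivAt g g' (hExp m₀ r₀ x t)) :
    HasDerivAt (fun s => g (hExp m₀ r₀ x s)) (2 * r₀ * (hExp m₀ r₀ x t * g')) t :=
  (hg.comp t hasDerivAt_hExp_t).congr_deriv (by ring)

theorem codazzi_of_euler_identities (v F : ℝ) {A B C : ℝ → ℝ} {A' B' C' : ℝ}
    (hA : HasDerivAt A A' (hExp m₀ r₀ x t)) (hB : HasDerivAt B B' (hExp m₀ r₀ x t))
    (hC : HasDerivAt C C' (hExp m₀ r₀ x t))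
    (hA_euler : 2 * (hExp m₀ r₀ x t * A') = A (hExp m₀ r₀ x t) - C (hExp m₀ r₀ x t))
    (hB_euler : hExp m₀ r₀ x t * B' = B (hExp m₀ r₀ x t)) :
    (v * deriv (fun s => A (hExp m₀ r₀ x s)) t
        + (-(2 * m₀)) * deriv (fun s => B (hExp m₀ r₀ x s)) t
        - F * deriv (fun s => A (hExp m₀ r₀ s t)) x
        - r₀ * deriv (fun s => B (hExp m₀ r₀ s t)) x
        - 2 * B (hExp m₀ r₀ x t) * (v * F - v * F)
        + (A (hExp m₀ r₀ x t) - C (hExp m₀ r₀ x t)) * ((-(2 * m₀)) * F - v * r₀) = 0) ∧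
    (v * deriv (fun s => B (hExp m₀ r₀ x s)) t
        + (-(2 * m₀)) * deriv (fun s => C (hExp m₀ r₀ x s)) t
        - F * deriv (fun s => B (hExp m₀ r₀ s t)) x
        - r₀ * deriv (fun s => C (hExp m₀ r₀ s t)) x
        + (A (hExp m₀ r₀ x t) - C (hExp m₀ r₀ x t)) * (v * F - v * F)
        + 2 * B (hExp m₀ r₀ x t) * ((-(2 * m₀)) * F - v * r₀) = 0) := by
  rw [hA.comp_hExp_t.deriv, hB.comp_hExp_t.deriv, hC.comp_hExp_t.deriv,
    hA.comp_hExp_x.deriv, hB.comp_hExp_x.deriv, hC.comp_hExp_x.deriv]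
  constructor
  · linear_combination (r₀ * v + 2 * m₀ * F) * hA_euler
  · linear_combination 2 * (r₀ * v + 2 * m₀ * F) * hB_euler

end ProfileCalculus

section QuadraticProfile

variable {γ L h : ℝ}

theorem hasDerivAt_sqrt_quadratic (hQ : 0 < L * h - γ ^ 2 * h ^ 2 - 1) :
    HasDerivAt (fun k => √(L * k - γ ^ 2 * k ^ 2 - 1))
      ((L - 2 * γ ^ 2 * h) / (2 * √(L * h - γ ^ 2 * h ^ 2 - 1))) h := by
  have hQ' : HasDerivAt (fun k => L * k - γ ^ 2 * k ^ 2 - 1) (L - 2 * γ ^ 2 * h) h :=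
    ((((hasDerivAt_id' h).const_mul L).sub ((hasDerivAt_pow 2 h).const_mul (γ ^ 2))).sub_const
      1).congr_deriv (by ring)
  exact hQ'.sqrt hQ.ne'

theorem differentiableAt_div_sqrt_quadratic (hQ : 0 < L * h - γ ^ 2 * h ^ 2 - 1) :
    DifferentiableAt ℝ (fun k => (γ ^ 2 * k ^ 2 - 1) / √(L * k - γ ^ 2 * k ^ 2 - 1)) h :=
  (by fun_prop : DifferentiableAt ℝ (fun k : ℝ => γ ^ 2 * k ^ 2 - 1) h).div
    (hasDerivAt_sqrt_quadratic hQ).differentiableAt (Real.sqrt_pos.2 hQ).ne'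

theorem two_mul_mul_deriv_sqrt_quadratic (hQ : 0 < L * h - γ ^ 2 * h ^ 2 - 1) :
    2 * (h * ((L - 2 * γ ^ 2 * h) / (2 * √(L * h - γ ^ 2 * h ^ 2 - 1)))) =
      √(L * h - γ ^ 2 * h ^ 2 - 1) - (γ ^ 2 * h ^ 2 - 1) / √(L * h - γ ^ 2 * h ^ 2 - 1) := by
  have hsq := Real.sq_sqrt hQ.le
  have hpos := Real.sqrt_pos.2 hQ
  set S := √(L * h - γ ^ 2 * h ^ 2 - 1)
  field_simp
  linear_combination -hsq

theorem exists_quadratic_pos (hL : 0 < L) (hγL : 4 * γ ^ 2 < L ^ 2) :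
    ∃ h > 0, 0 < L * h - γ ^ 2 * h ^ 2 - 1 := by
  refine ⟨2 / L, by positivity, ?_⟩
  have key : L * (2 / L) - γ ^ 2 * (2 / L) ^ 2 - 1 = (L ^ 2 - 4 * γ ^ 2) / L ^ 2 := by
    field_simp
    ring
  rw [key]
  exact div_pos (by linarith) (by positivity)

end QuadraticProfile

theorem exists_hExp_eq {m₀ : ℝ} (r₀ : ℝ) (hm₀ : m₀ ≠ 0) {h : ℝ} (hh : 0 < h) :
    ∃ x, hExp m₀ r₀ x 0 = h :=
  ⟨Real.log h / (-(4 * m₀)), by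
    rw [hExp]
    convert Real.exp_log hh using 2
    field_simp
    ring⟩

theorem fourth_order_example_universal_immersion_general
    (m₀ m₁ γ L B r₀ : ℝ) (hm₀ : m₀ ≠ 0) (hL : 0 < L) (hγL : 4 * γ ^ 2 < L ^ 2) :
    (∃ x t : ℝ, 0 < L * hExp m₀ r₀ x t - γ ^ 2 * (hExp m₀ r₀ x t) ^ 2 - 1) ∧
    (∀ x t : ℝ, 0 < L * hExp m₀ r₀ x t - γ ^ 2 * (hExp m₀ r₀ x t) ^ 2 - 1 →
      aImm m₀ r₀ γ L x t * cImm m₀ r₀ γ L x t - (bImm m₀ r₀ γ x t) ^ 2 = -1) ∧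
    (∀ u : ℝ → ℝ → ℝ, ContDiff ℝ (⊤ : ℕ∞) (fun p : ℝ × ℝ => u p.1 p.2) →
      ∀ x t : ℝ, 0 < L * hExp m₀ r₀ x t - γ ^ 2 * (hExp m₀ r₀ x t) ^ 2 - 1 →
      (u x t * deriv (fun s => aImm m₀ r₀ γ L x s) t
          + (-(2 * m₀)) * deriv (fun s => bImm m₀ r₀ γ x s) t
          - f12F m₀ m₁ B u x t * deriv (fun s => aImm m₀ r₀ γ L s t) x
          - r₀ * deriv (fun s => bImm m₀ r₀ γ s t) x
          - 2 * bImm m₀ r₀ γ x t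
              * (u x t * f12F m₀ m₁ B u x t - u x t * f12F m₀ m₁ B u x t)
          + (aImm m₀ r₀ γ L x t - cImm m₀ r₀ γ L x t)
              * ((-(2 * m₀)) * f12F m₀ m₁ B u x t - u x t * r₀) = 0) ∧
      (u x t * deriv (fun s => bImm m₀ r₀ γ x s) t
          + (-(2 * m₀)) * deriv (fun s => cImm m₀ r₀ γ L x s) t
          - f12F m₀ m₁ B u x t * deriv (fun s => bImm m₀ r₀ γ s t) x
          - r₀ * deriv (fun s => cImm m₀ r₀ γ L s t) x
          + (aImm m₀ r₀ γ L x t - cImm m₀ r₀ γ L x t)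
              * (u x t * f12F m₀ m₁ B u x t - u x t * f12F m₀ m₁ B u x t)
          + 2 * bImm m₀ r₀ γ x t
              * ((-(2 * m₀)) * f12F m₀ m₁ B u x t - u x t * r₀) = 0)) := by
  refine ⟨?_, fun x t hQ => ?_, fun u _ x t hQ => ?_⟩
  · obtain ⟨h, hh, hQ⟩ := exists_quadratic_pos hL hγL
    obtain ⟨x, rfl⟩ := exists_hExp_eq r₀ hm₀ hh
    exact ⟨x, 0, hQ⟩
  · have ha : aImm m₀ r₀ γ L x t ≠ 0 := (Real.sqrt_pos.2 hQ).ne'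
    rw [cImm, mul_div_cancel₀ _ ha, bImm]
    ring
  · exact codazzi_of_euler_identities (u x t) (f12F m₀ m₁ B u x t)
      (hasDerivAt_sqrt_quadratic hQ) ((hasDerivAt_id' _).const_mul γ)
      (differentiableAt_div_sqrt_quadratic hQ).hasDerivAt
      (two_mul_mul_deriv_sqrt_quadratic hQ) (by ring)

/-- for the fourth-order evolution equation
`u_t = u_xxxx + m₁u_xxx + m₂u_xx - uu_x + m₀u²`, the open set
`U = {Lh - γ²h² - 1 > 0}` is nonempty, the universal functions `a = √(Lh - γ²h² - 1)`,
`b = γh`, `c = (γ²h² - 1)/a` satisfy the Gauss equation on `U`, and for every smooth `u`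
they satisfy both Codazzi equations on `U`, where `f₁₁ = f₃₁ = u`, `f₁₂ = f₃₂ = u_xxx + φ`,
`f₂₁ = -2m₀`, `f₂₂ = r₀`. -/
theorem fourth_order_example_universal_immersion
    (m₀ m₁ m₂ γ L B r₀ : ℝ) (hm₀ : m₀ ≠ 0) (hL : 0 < L) (hγL : 4 * γ ^ 2 < L ^ 2)
    (hB : B = 4 * m₀ ^ 2 + 2 * m₀ * m₁ + m₂) (hr₀ : r₀ = -4 * m₀ ^ 2 * B) :
    (∃ x t : ℝ, 0 < L * hExp m₀ r₀ x t - γ ^ 2 * (hExp m₀ r₀ x t) ^ 2 - 1) ∧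
    (∀ x t : ℝ, 0 < L * hExp m₀ r₀ x t - γ ^ 2 * (hExp m₀ r₀ x t) ^ 2 - 1 →
      aImm m₀ r₀ γ L x t * cImm m₀ r₀ γ L x t - (bImm m₀ r₀ γ x t) ^ 2 = -1) ∧
    (∀ u : ℝ → ℝ → ℝ, ContDiff ℝ (⊤ : ℕ∞) (fun p : ℝ × ℝ => u p.1 p.2) →
      ∀ x t : ℝ, 0 < L * hExp m₀ r₀ x t - γ ^ 2 * (hExp m₀ r₀ x t) ^ 2 - 1 →
      (u x t * deriv (fun s => aImm m₀ r₀ γ L x s) t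
          + (-(2 * m₀)) * deriv (fun s => bImm m₀ r₀ γ x s) t
          - f12F m₀ m₁ B u x t * deriv (fun s => aImm m₀ r₀ γ L s t) x
          - r₀ * deriv (fun s => bImm m₀ r₀ γ s t) x
          - 2 * bImm m₀ r₀ γ x t
              * (u x t * f12F m₀ m₁ B u x t - u x t * f12F m₀ m₁ B u x t)
          + (aImm m₀ r₀ γ L x t - cImm m₀ r₀ γ L x t)
              * ((-(2 * m₀)) * f12F m₀ m₁ B u x t - u x t * r₀) = 0) ∧
      (u x t * deriv (fun s => bImm m₀ r₀ γ x s) t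
          + (-(2 * m₀)) * deriv (fun s => cImm m₀ r₀ γ L x s) t
          - f12F m₀ m₁ B u x t * deriv (fun s => bImm m₀ r₀ γ s t) x
          - r₀ * deriv (fun s => cImm m₀ r₀ γ L s t) x
          + (aImm m₀ r₀ γ L x t - cImm m₀ r₀ γ L x t)
              * (u x t * f12F m₀ m₁ B u x t - u x t * f12F m₀ m₁ B u x t)
          + 2 * bImm m₀ r₀ γ x t
              * ((-(2 * m₀)) * f12F m₀ m₁ B u x t - u x t * r₀) = 0)) :=
  fourth_order_example_universal_immersion_general m₀ m₁ γ L B r₀ hm₀ hL hγL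
end
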